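/- arXiv:2412.15842 — 12 statements merged into one kernel-verified Lean document; each statement's English description precedes it below -/
import Mathlib

section
/- Let G be a finite group acting transitively and faithfully with fixity k on a finite set Ω (i.e., k is the maximum number of fixed points of nontrivial elements of G). If X is a nontrivial subgroup of the point stabilizer G_α for some α ∈ Ω, then the index of N_{G_α}(X) in N_G(X) is at most k. -/
open MulAction Pointwise

def HasFixity (G Ω : Type*) [Group G] [MulAction G Ω] (k : ℕ) : Prop :=
  (∀ g : G, g ≠ 1 → (fixedBy Ω g).ncard ≤ k) ∧ ∃ g : G, g ≠ 1 ∧ (fixedBy Ω g).ncard = k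

def IsSemiregular (G Ω : Type*) [Group G] [MulAction G Ω] (N : Subgroup G) : Prop :=
  ∀ n ∈ N, n ≠ 1 → ∀ ω : Ω, n • ω ≠ ω

def IsMinimalNormal (G : Type*) [Group G] (N : Subgroup G) : Prop :=
  N.Normal ∧ N ≠ ⊥ ∧ ∀ M : Subgroup G, M.Normal → M ≤ N → M = ⊥ ∨ M = N

def IsOrbitOf (G Ω : Type*) [Group G] [MulAction G Ω] (N : Subgroup G) (s : Set Ω) : Prop :=
  ∃ ω : Ω, s = MulAction.orbit N ω

def IsRegularOn (G Ω : Type*) [Group G] [MulAction G Ω] (R : Subgroup G) : Prop :=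
  (∀ ω ω' : Ω, ∃ r ∈ R, r • ω = ω') ∧ ∀ r ∈ R, r ≠ 1 → ∀ ω : Ω, r • ω ≠ ω

def IsFrobeniusOn (G Ω : Type*) [Group G] [MulAction G Ω] (F : Subgroup G) (s : Set Ω) : Prop :=
  (∃ f ∈ F, f ≠ 1 ∧ ∃ ω ∈ s, f • ω = ω) ∧
  ∀ f ∈ F, f ≠ 1 → ∀ ω ∈ s, ∀ ω' ∈ s, f • ω = ω → f • ω' = ω' → ω = ω'

/-
If `x ≠ 1` lies in `X ≤ G_α`, then every `n ∈ N_G(X)` conjugates `x` back into `X ⊆ G_α`, so `x`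
fixes `n • α`. Hence the `N_G(X)`-orbit of `α`, whose size is the index of `N_{G_α}(X)` in
`N_G(X)`, consists of fixed points of `x`, and there are at most `k` of them.
-/

namespace MulAction

variable {G Ω : Type*} [Group G] [MulAction G Ω]

theorem relIndex_stabilizer_eq_ncard_orbit (H : Subgroup G) (α : Ω) :
    (stabilizer G α).relIndex H = (orbit H α).ncard := by
  have hstab : (stabilizer G α).subgroupOf H = stabilizer H α := by
    ext n
    simp only [Subgroup.mem_subgroupOf, mem_stabilizer_iff, Subgroup.smul_def]
  rw [Subgroup.relIndex, hstab, index_stabilizer]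

theorem orbit_normalizer_subset_fixedBy {X : Subgroup G} {α : Ω} (hX : X ≤ stabilizer G α)
    {x : G} (hx : x ∈ X) : orbit (Subgroup.normalizer (X : Set G)) α ⊆ fixedBy Ω x := by
  rintro _ ⟨n, rfl⟩
  have hconj : (n : G)⁻¹ * x * n ∈ X := by
    simpa using (Subgroup.mem_normalizer_iff.mp (inv_mem n.2) x).mp hx
  calc x • (n : G) • α = (n : G) • ((n : G)⁻¹ * x * n) • α := by simp [mul_smul]
    _ = (n : G) • α := by rw [hX hconj]

end MulAction

theorem stmt_0_general (G Ω : Type*) [Group G] [MulAction G Ω] [Finite Ω]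
    (k : ℕ) (hfix : HasFixity G Ω k)
    (α : Ω) (X : Subgroup G) (hX : X ≠ ⊥) (hXle : X ≤ stabilizer G α) :
    (stabilizer G α).relIndex (Subgroup.normalizer (X : Set G)) ≤ k := by
  obtain ⟨x, hxX, hx1⟩ := X.bot_or_exists_ne_one.resolve_left hX
  rw [relIndex_stabilizer_eq_ncard_orbit]
  calc (orbit _ α).ncard ≤ (fixedBy Ω x).ncard :=
        Set.ncard_le_ncard (orbit_normalizer_subset_fixedBy hXle hxX) (Set.toFinite _)
    _ ≤ k := hfix.1 x hx1

theorem stmt_0 (G Ω : Type*) [Group G] [Finite G] [MulAction G Ω] [Finite Ω]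
    [FaithfulSMul G Ω] [IsPretransitive G Ω] (k : ℕ) (hfix : HasFixity G Ω k)
    (α : Ω) (X : Subgroup G) (hX : X ≠ ⊥) (hXle : X ≤ stabilizer G α) :
    (stabilizer G α).relIndex (Subgroup.normalizer (X : Set G)) ≤ k :=
  stmt_0_general G Ω k hfix α X hX hXle
end

section
/- Let G be a finite group acting transitively and faithfully with fixity k on a finite set Ω of size at least 2. Then the order of the center Z(G) divides k. -/
open MulAction Pointwise

/-- A finite group acting freely on a finite set has order dividing the set's cardinality. -/
lemma free_card_dvd {H X : Type*} [Group H] [Finite H] [Finite X] [MulAction H X]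
    (hfree : ∀ (h : H) (x : X), h • x = x → h = 1) : Nat.card H ∣ Nat.card X := by
  classical
  cases nonempty_fintype H
  cases nonempty_fintype X
  rw [Nat.card_eq_fintype_card, Nat.card_eq_fintype_card,
    card_eq_sum_card_group_div_card_stabilizer H X]
  have hc : ∀ (x : X) (inst : Fintype (stabilizer H x)), Fintype.card (stabilizer H x) = 1 := by
    intro x _
    rw [Fintype.card_eq_one_iff]
    refine ⟨⟨1, one_smul H x⟩, fun y => Subtype.ext (hfree y.1 x y.2)⟩
  have : ∀ ω : Quotient (orbitRel H X),
      Fintype.card H / Fintype.card (stabilizer H ω.out) = Fintype.card H := by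
    intro ω; rw [hc, Nat.div_one]
  rw [Finset.sum_congr rfl fun ω _ => this ω, Finset.sum_const, smul_eq_mul]
  exact dvd_mul_left _ _

theorem stmt_2 (G Ω : Type*) [Group G] [Finite G] [MulAction G Ω] [Finite Ω]
    [FaithfulSMul G Ω] [IsPretransitive G Ω] (k : ℕ) (hfix : HasFixity G Ω k)
    (hΩ : 2 ≤ Nat.card Ω) :
    Nat.card (Subgroup.center G) ∣ k := by
  obtain ⟨-, g, hg1, hgcard⟩ := hfix
  set Z := Subgroup.center G with hZ
  -- the fixed set of g is invariant under the center
  have hsmem : ∀ (z : Z) {x : Ω}, x ∈ fixedBy Ω g → (z : G) • x ∈ fixedBy Ω g := by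
    intro z x hx
    have hz := (Subgroup.mem_center_iff.mp z.2) g
    show g • ((z : G) • x) = (z : G) • x
    rw [smul_smul, hz, mul_smul, hx]
  let p : SubMulAction Z Ω := ⟨fixedBy Ω g, fun z {x} hx => hsmem z hx⟩
  -- the center acts freely on this set
  have hfree : ∀ (z : Z) (x : p), z • x = x → z = 1 := by
    intro z x hx
    have hx' : (z : G) • (x : Ω) = (x : Ω) := congrArg Subtype.val hx
    have hall : ∀ ω : Ω, (z : G) • ω = (1 : G) • ω := by
      intro ω
      obtain ⟨h, rfl⟩ := exists_smul_eq G (x : Ω) ω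
      have hz := (Subgroup.mem_center_iff.mp z.2) h
      rw [one_smul, smul_smul, ← hz, mul_smul, hx']
    exact Subtype.ext (eq_of_smul_eq_smul hall)
  have hdvd : Nat.card Z ∣ Nat.card p := free_card_dvd hfree
  have hcard : Nat.card p = (fixedBy Ω g).ncard := by
    rw [← Nat.card_coe_set_eq]
    exact Nat.card_congr (Equiv.subtypeEquivRight fun x => Iff.rfl)
  rw [hcard, hgcard] at hdvd
  exact hdvd
end

section
/- Let G be a finite group acting transitively and faithfully with fixity 2 on a finite set Ω, and let N be an abelian minimal normal subgroup of G of order p^n for a prime p. If N does not act semi-regularly on Ω (i.e., some nontrivial element of N fixes a point), then p = 2, |N| = 4, every N-orbit has length 2, and |Ω| = 6. -/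
open MulAction Pointwise

theorem stmt_3 (G Ω : Type*) [Group G] [Finite G] [MulAction G Ω] [Finite Ω]
    [FaithfulSMul G Ω] [IsPretransitive G Ω] (hfix : HasFixity G Ω 2)
    (N : Subgroup G) (hmin : IsMinimalNormal G N) (hab : ∀ x ∈ N, ∀ y ∈ N, x * y = y * x)
    (p : ℕ) (n : ℕ) (hp : p.Prime) (hcard : Nat.card N = p ^ n)
    (hnotsemi : ¬ IsSemiregular G Ω N) :
    p = 2 ∧ Nat.card N = 4 ∧ (∀ ω : Ω, (MulAction.orbit N ω).ncard = 2) ∧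
      Nat.card Ω = 6 := by
  obtain ⟨hnormal, hnbot, hminimal⟩ := hmin
  rw [IsSemiregular] at hnotsemi
  push_neg at hnotsemi
  obtain ⟨a, haN, ha1, ω₀, haω₀⟩ := hnotsemi
  -- Step B : every point has a nontrivial stabilizing element of N
  have hBstep : ∀ ω : Ω, ∃ m : G, m ∈ N ∧ m ≠ 1 ∧ m • ω = ω := by
    intro ω
    obtain ⟨g, hg⟩ := MulAction.exists_smul_eq G ω₀ ω
    refine ⟨g * a * g⁻¹, hnormal.conj_mem a haN g, ?_, ?_⟩
    · intro h
      apply ha1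
      have := congrArg (fun y => g⁻¹ * y * g) h
      simpa [mul_assoc] using this
    · rw [← hg]
      simp [mul_smul, haω₀]
  -- Step A : fixedBy = orbit for nontrivial fixing elements, orbits have size 2
  have hA : ∀ (ω : Ω) (m : G), m ∈ N → m ≠ 1 → m • ω = ω →
      fixedBy Ω m = MulAction.orbit N ω ∧ (MulAction.orbit N ω).ncard = 2 := by
    intro ω m hmN hm1 hmω
    have horb_sub : MulAction.orbit N ω ⊆ fixedBy Ω m := by
      rintro x ⟨⟨g, hgN⟩, hgx⟩
      have hgx' : g • ω = x := hgx
      show m • x = x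
      rw [← hgx', ← mul_smul, hab m hmN g hgN, mul_smul, hmω]
    have hfix2 : (fixedBy Ω m).ncard ≤ 2 := hfix.1 m hm1
    obtain ⟨δ, hδorb, hδne⟩ : ∃ δ ∈ MulAction.orbit N ω, δ ≠ ω := by
      by_contra h
      push_neg at h
      have hNfix : ∀ g ∈ N, g • ω = ω := fun g hg => h _ ⟨⟨g, hg⟩, rfl⟩
      apply hm1
      apply eq_of_smul_eq_smul (α := Ω)
      intro δ
      obtain ⟨g, hg⟩ := MulAction.exists_smul_eq G ω δ
      have hmem : g⁻¹ * m * g ∈ N := by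
        simpa using hnormal.conj_mem m hmN g⁻¹
      calc m • δ = m • g • ω := by rw [hg]
        _ = g • (g⁻¹ * m * g) • ω := by simp [mul_smul]
        _ = g • ω := by rw [hNfix _ hmem]
        _ = (1 : G) • δ := by rw [one_smul, hg]
    have h2le : 2 ≤ (MulAction.orbit N ω).ncard := by
      have hpair : ({δ, ω} : Set Ω).ncard = 2 := Set.ncard_pair hδne
      rw [← hpair]
      refine Set.ncard_le_ncard ?_ (Set.toFinite _)
      intro x hx
      rcases hx with h | h
      · exact h ▸ hδorb
      · exact h ▸ MulAction.mem_orbit_self _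
    have hle2 : (MulAction.orbit N ω).ncard ≤ 2 :=
      le_trans (Set.ncard_le_ncard horb_sub (Set.toFinite _)) hfix2
    have horb2 : (MulAction.orbit N ω).ncard = 2 := le_antisymm hle2 h2le
    refine ⟨(Set.eq_of_subset_of_ncard_le horb_sub (by omega) (Set.toFinite _)).symm, horb2⟩
  have horb2 : ∀ ω : Ω, (MulAction.orbit N ω).ncard = 2 := by
    intro ω
    obtain ⟨m, hmN, hm1, hmω⟩ := hBstep ω
    exact (hA ω m hmN hm1 hmω).2
  -- orbit stabilizer
  have hos : ∀ ω : Ω, 2 * Nat.card (MulAction.stabilizer N ω) = Nat.card N := by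
    intro ω
    have h := Nat.card_congr (MulAction.orbitProdStabilizerEquivGroup N ω)
    rw [Nat.card_prod, Nat.card_coe_set_eq, horb2 ω] at h
    exact h
  -- p = 2
  have hp2 : p = 2 := by
    have hdvd : 2 ∣ Nat.card N := ⟨_, (hos ω₀).symm⟩
    rw [hcard] at hdvd
    have h2p : 2 ∣ p := Nat.Prime.dvd_of_dvd_pow Nat.prime_two hdvd
    exact ((Nat.prime_dvd_prime_iff_eq Nat.prime_two hp).mp h2p).symm
  -- a second point outside the orbit of ω₀
  obtain ⟨ω', hω'⟩ : ∃ ω' : Ω, ω' ∉ MulAction.orbit N ω₀ := by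
    by_contra h
    push_neg at h
    apply ha1
    apply eq_of_smul_eq_smul (α := Ω)
    intro δ
    have hδ : δ ∈ fixedBy Ω a := by
      rw [(hA ω₀ a haN ha1 haω₀).1]
      exact h δ
    rw [one_smul]
    exact hδ
  obtain ⟨b, hbN, hb1, hbω'⟩ := hBstep ω'
  -- stabilizers of points in different orbits intersect trivially
  have hdisj_stab : ∀ (ω₁ ω₂ : Ω) (m : G), m ∈ N → m ≠ 1 → m • ω₁ = ω₁ → m • ω₂ = ω₂ →
      MulAction.orbit N ω₁ = MulAction.orbit N ω₂ := by
    intro ω₁ ω₂ m hmN hm1 h1 h2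
    rw [← (hA ω₁ m hmN hm1 h1).1, (hA ω₂ m hmN hm1 h2).1]
  have hab_ne : a ≠ b := by
    intro h
    apply hω'
    have : ω' ∈ fixedBy Ω a := by rw [h]; exact hbω'
    rw [(hA ω₀ a haN ha1 haω₀).1] at this
    exact this
  -- |N| = 4
  have hcard4 : Nat.card N = 4 := by
    set S := MulAction.stabilizer N ω₀ with hS
    set T := MulAction.stabilizer N ω' with hT
    have hST : S ⊓ T = ⊥ := by
      rw [Subgroup.eq_bot_iff_forall]
      rintro ⟨m, hmN⟩ hm
      by_contra hm1
      have hm1' : m ≠ 1 := by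
        intro h; apply hm1; exact Subtype.ext h
      have h1 : m • ω₀ = ω₀ := hm.1
      have h2 : m • ω' = ω' := hm.2
      apply hω'
      rw [← hdisj_stab ω' ω₀ m hmN hm1' h2 h1]
      exact MulAction.mem_orbit_self ω'
    -- injection S × T → N
    have hinj : Function.Injective (fun z : S × T => (z.1 : N) * (z.2 : N)) := by
      rintro ⟨a₁, b₁⟩ ⟨a₂, b₂⟩ h
      simp only at h
      have key : (a₂ : N)⁻¹ * (a₁ : N) = (b₂ : N) * (b₁ : N)⁻¹ := by
        apply mul_right_cancel (b := (b₁ : N))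
        rw [mul_assoc, h, inv_mul_cancel_left, mul_assoc, inv_mul_cancel, mul_one]
      have hmemS : (a₂ : N)⁻¹ * (a₁ : N) ∈ S := S.mul_mem (S.inv_mem a₂.2) a₁.2
      have hmemT : (a₂ : N)⁻¹ * (a₁ : N) ∈ T := by
        rw [key]; exact T.mul_mem b₂.2 (T.inv_mem b₁.2)
      have hbot : (a₂ : N)⁻¹ * (a₁ : N) ∈ S ⊓ T := ⟨hmemS, hmemT⟩
      rw [hST, Subgroup.mem_bot] at hbot
      have ha12 : (a₁ : N) = (a₂ : N) := by
        have := hbot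
        rw [inv_mul_eq_one] at this; exact this.symm
      have hb12 : (b₁ : N) = (b₂ : N) := by
        have h1 : (b₂ : N) * (b₁ : N)⁻¹ = 1 := by rw [← key, hbot]
        rw [mul_inv_eq_one] at h1; exact h1.symm
      exact Prod.ext (Subtype.ext ha12) (Subtype.ext hb12)
    have hle : Nat.card S * Nat.card T ≤ Nat.card N := by
      have := Nat.card_le_card_of_injective _ hinj
      rwa [Nat.card_prod] at this
    have hSge : 2 ≤ Nat.card S := by
      refine (Subgroup.one_lt_card_iff_ne_bot _).mpr ?_
      rw [Subgroup.ne_bot_iff_exists_ne_one]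
      refine ⟨⟨⟨a, haN⟩, ?_⟩, ?_⟩
      · show (⟨a, haN⟩ : N) • ω₀ = ω₀
        rw [Subgroup.mk_smul]; exact haω₀
      · intro h
        apply ha1
        simpa [Subtype.ext_iff] using h
    have hTge : 2 ≤ Nat.card T := by
      refine (Subgroup.one_lt_card_iff_ne_bot _).mpr ?_
      rw [Subgroup.ne_bot_iff_exists_ne_one]
      refine ⟨⟨⟨b, hbN⟩, ?_⟩, ?_⟩
      · show (⟨b, hbN⟩ : N) • ω' = ω'
        rw [Subgroup.mk_smul]; exact hbω'
      · intro h
        apply hb1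
        simpa [Subtype.ext_iff] using h
    have hSeq : 2 * Nat.card S = Nat.card N := hos ω₀
    have hTeq : 2 * Nat.card T = Nat.card N := hos ω'
    nlinarith [hle, hSge, hTge, hSeq, hTeq]
  -- uniqueness of the nontrivial fixing element at each point
  have huniq : ∀ (ω : Ω) (m m' : G), m ∈ N → m ≠ 1 → m • ω = ω →
      m' ∈ N → m' ≠ 1 → m' • ω = ω → m = m' := by
    intro ω m m' hmN hm1 hmω hm'N hm'1 hm'ω
    have hstab2 : Nat.card (MulAction.stabilizer N ω) = 2 := by
      have := hos ω; rw [hcard4] at this; omega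
    obtain ⟨u, v, huv, huniv⟩ := Nat.card_eq_two_iff.mp hstab2
    set em : MulAction.stabilizer N ω :=
      ⟨⟨m, hmN⟩, show (⟨m, hmN⟩ : N) • ω = ω from hmω⟩ with hemdef
    set em' : MulAction.stabilizer N ω :=
      ⟨⟨m', hm'N⟩, show (⟨m', hm'N⟩ : N) • ω = ω from hm'ω⟩ with hem'def
    have hem1 : em ≠ 1 := by
      intro h; apply hm1
      simpa [hemdef, Subtype.ext_iff] using h
    have hem'1 : em' ≠ 1 := by
      intro h; apply hm'1
      simpa [hem'def, Subtype.ext_iff] using h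
    have h1 : (1 : MulAction.stabilizer N ω) ∈ ({u, v} : Set _) := by rw [huniv]; trivial
    have h2 : em ∈ ({u, v} : Set _) := by rw [huniv]; trivial
    have h3 : em' ∈ ({u, v} : Set _) := by rw [huniv]; trivial
    have key : em = em' := by
      rcases h1 with h1 | h1 <;> rcases h2 with h2 | h2 <;> rcases h3 with h3 | h3 <;>
        first
          | exact h2.trans h3.symm
          | exact absurd (h2.trans h1.symm) hem1
          | exact absurd (h3.trans h1.symm) hem'1
    have := congrArg (fun z : MulAction.stabilizer N ω => ((z : N) : G)) key
    simpa [hemdef, hem'def] using this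
  -- every fixing element has order 2
  have order2 : ∀ m : G, m ∈ N → m ≠ 1 → ∀ ω : Ω, m • ω = ω → m * m = 1 := by
    intro m hmN hm1 ω hmω
    by_contra hmm
    have h2 : (m * m) • ω = ω := by rw [mul_smul, hmω, hmω]
    have hmmm := huniq ω (m * m) m (N.mul_mem hmN hmN) hmm h2 hmN hm1 hmω
    exact hm1 (mul_left_cancel (show m * m = m * 1 by rw [mul_one]; exact hmmm))
  have ha2 : a * a = 1 := order2 a haN ha1 ω₀ haω₀
  have hb2 : b * b = 1 := order2 b hbN hb1 ω' hbω'
  have hcN : a * b ∈ N := N.mul_mem haN hbN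
  have hc1 : a * b ≠ 1 := by
    intro h
    apply hab_ne
    have hbinv : b⁻¹ = b := inv_eq_of_mul_eq_one_right hb2
    rw [← hbinv]
    exact eq_inv_of_mul_eq_one_left h
  have hca : a * b ≠ a := by
    intro h
    exact hb1 (mul_left_cancel (h.trans (mul_one a).symm))
  have hcb : a * b ≠ b := by
    intro h
    exact ha1 (mul_right_cancel (h.trans (one_mul b).symm))
  -- N = {1, a, b, a*b} as a set
  have hmem4 : ∀ m : G, m ∈ N → m = 1 ∨ m = a ∨ m = b ∨ m = a * b := by
    have hsub : ({1, a, b, a * b} : Set G) ⊆ (N : Set G) := by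
      intro y hy
      simp only [Set.mem_insert_iff, Set.mem_singleton_iff] at hy
      rcases hy with rfl | rfl | rfl | rfl
      · exact N.one_mem
      · exact haN
      · exact hbN
      · exact hcN
    have hc4 : ({1, a, b, a * b} : Set G).ncard = 4 := by
      have h1 : (1 : G) ∉ ({a, b, a * b} : Set G) := by
        simp only [Set.mem_insert_iff, Set.mem_singleton_iff]
        push_neg
        exact ⟨Ne.symm ha1, Ne.symm hb1, Ne.symm hc1⟩
      have h2 : a ∉ ({b, a * b} : Set G) := by
        simp only [Set.mem_insert_iff, Set.mem_singleton_iff]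
        push_neg
        exact ⟨hab_ne, Ne.symm hca⟩
      rw [Set.ncard_insert_of_notMem h1, Set.ncard_insert_of_notMem h2,
        Set.ncard_pair (Ne.symm hcb)]
    have hNcard : (N : Set G).ncard = 4 := by
      rw [← Nat.card_coe_set_eq]; exact hcard4
    have hNset : ({1, a, b, a * b} : Set G) = (N : Set G) :=
      Set.eq_of_subset_of_ncard_le hsub (by rw [hNcard, hc4]) (Set.toFinite _)
    intro m hm
    have : m ∈ ({1, a, b, a * b} : Set G) := by rw [hNset]; exact hm
    simpa using this
  -- a*b also fixes a point
  obtain ⟨ωc, hωc⟩ : ∃ ω : Ω, (a * b) • ω = ω := by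
    by_contra hcnofix
    push_neg at hcnofix
    have hclass : ∀ m : G, m ∈ N → m ≠ 1 → (∃ ω : Ω, m • ω = ω) → m = a ∨ m = b := by
      intro m hmN hm1 hfixm
      obtain ⟨ω, hω⟩ := hfixm
      rcases hmem4 m hmN with h | h | h | h
      · exact absurd h hm1
      · exact Or.inl h
      · exact Or.inr h
      · exact absurd hω (h ▸ hcnofix ω)
    have hconj : ∀ g : G, g * (a * b) * g⁻¹ = a * b := by
      intro g
      have hga : g * a * g⁻¹ = a ∨ g * a * g⁻¹ = b := by
        refine hclass _ (hnormal.conj_mem a haN g) ?_ ⟨g • ω₀, by simp [mul_smul, haω₀]⟩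
        intro h
        apply ha1
        have := congrArg (fun y => g⁻¹ * y * g) h
        simpa [mul_assoc] using this
      have hgb : g * b * g⁻¹ = a ∨ g * b * g⁻¹ = b := by
        refine hclass _ (hnormal.conj_mem b hbN g) ?_ ⟨g • ω', by simp [mul_smul, hbω']⟩
        intro h
        apply hb1
        have := congrArg (fun y => g⁻¹ * y * g) h
        simpa [mul_assoc] using this
      have hne : g * a * g⁻¹ ≠ g * b * g⁻¹ := by
        intro h
        exact hab_ne (mul_left_cancel (mul_right_cancel h))
      have hsplit : g * (a * b) * g⁻¹ = (g * a * g⁻¹) * (g * b * g⁻¹) := by group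
      rcases hga with h1 | h1 <;> rcases hgb with h2 | h2
      · exact absurd (h1.trans h2.symm) hne
      · rw [hsplit, h1, h2]
      · rw [hsplit, h1, h2, hab b hbN a haN]
      · exact absurd (h1.trans h2.symm) hne
    set M := Subgroup.closure ({a * b} : Set G) with hM
    have hcM : a * b ∈ M := Subgroup.subset_closure rfl
    have hMnormal : M.Normal := by
      constructor
      intro x hx g
      obtain ⟨k, hk⟩ := Subgroup.mem_closure_singleton.mp hx
      have heq : g * x * g⁻¹ = x := by rw [← hk, ← conj_zpow, hconj g]
      rw [heq]
      exact hx
    have hMleN : M ≤ N := (Subgroup.closure_le N).mpr (by simpa using hcN)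
    rcases hminimal M hMnormal hMleN with h | h
    · apply hc1
      have := hcM
      rw [h, Subgroup.mem_bot] at this
      exact this
    · have haM : a ∈ M := by rw [h]; exact haN
      obtain ⟨k, hk⟩ := Subgroup.mem_closure_singleton.mp haM
      have hcc : (a * b) * (a * b) = 1 := by
        rw [show (a * b) * (a * b) = a * (b * a) * b by group, hab b hbN a haN,
          show a * (a * b) * b = (a * a) * (b * b) by group, ha2, hb2, one_mul]
      have hzp2 : (a * b) ^ (2 : ℤ) = 1 := by
        rw [show (2 : ℤ) = 1 + 1 by norm_num, zpow_add, zpow_one, hcc]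
      have hck : a = 1 ∨ a = a * b := by
        rcases Int.even_or_odd k with ⟨t, ht⟩ | ⟨t, ht⟩
        · left
          rw [← hk, ht, show t + t = 2 * t by ring, zpow_mul, hzp2, one_zpow]
        · right
          have hkk : (a * b) ^ k = a * b := by
            rw [ht, zpow_add, zpow_mul, hzp2, one_zpow, one_mul, zpow_one]
          exact hk.symm.trans hkk
      rcases hck with h' | h'
      · exact ha1 h'
      · exact hca h'.symm
  -- the three fixed point sets
  have hFa : fixedBy Ω a = MulAction.orbit N ω₀ := (hA ω₀ a haN ha1 haω₀).1
  have hFb : fixedBy Ω b = MulAction.orbit N ω' := (hA ω' b hbN hb1 hbω').1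
  have hFc : fixedBy Ω (a * b) = MulAction.orbit N ωc := (hA ωc (a * b) hcN hc1 hωc).1
  have hfa2 : (fixedBy Ω a).ncard = 2 := by rw [hFa]; exact horb2 ω₀
  have hfb2 : (fixedBy Ω b).ncard = 2 := by rw [hFb]; exact horb2 ω'
  have hfc2 : (fixedBy Ω (a * b)).ncard = 2 := by rw [hFc]; exact horb2 ωc
  have hcover : (Set.univ : Set Ω) =
      fixedBy Ω a ∪ (fixedBy Ω b ∪ fixedBy Ω (a * b)) := by
    apply Set.eq_of_subset_of_subset
    · intro ω _
      obtain ⟨m, hmN, hm1, hmω⟩ := hBstep ω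
      rcases hmem4 m hmN with h | h | h | h
      · exact absurd h hm1
      · exact Or.inl (show a • ω = ω from h ▸ hmω)
      · exact Or.inr (Or.inl (show b • ω = ω from h ▸ hmω))
      · exact Or.inr (Or.inr (show (a * b) • ω = ω from h ▸ hmω))
    · intro ω _
      trivial
  have hdab : Disjoint (fixedBy Ω a) (fixedBy Ω b) := by
    rw [Set.disjoint_left]
    intro ω hωa hωb
    exact hab_ne (huniq ω a b haN ha1 hωa hbN hb1 hωb)
  have hdac : Disjoint (fixedBy Ω a) (fixedBy Ω (a * b)) := by
    rw [Set.disjoint_left]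
    intro ω hωa hωb
    exact (Ne.symm hca) (huniq ω a (a * b) haN ha1 hωa hcN hc1 hωb)
  have hdbc : Disjoint (fixedBy Ω b) (fixedBy Ω (a * b)) := by
    rw [Set.disjoint_left]
    intro ω hωa hωb
    exact (Ne.symm hcb) (huniq ω b (a * b) hbN hb1 hωa hcN hc1 hωb)
  have hΩ6 : Nat.card Ω = 6 := by
    rw [← Set.ncard_univ, hcover,
      Set.ncard_union_eq (Set.disjoint_union_right.mpr ⟨hdab, hdac⟩)
        (Set.toFinite _) (Set.toFinite _),
      Set.ncard_union_eq hdbc (Set.toFinite _) (Set.toFinite _),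
      hfa2, hfb2, hfc2]
  exact ⟨hp2, hcard4, horb2, hΩ6⟩
end

section
/- Let G be a finite group acting transitively and faithfully with fixity 2 on a finite set Ω, let N be an abelian minimal normal subgroup of G that acts semi-regularly on Ω, and let Ω̄ be the set of N-orbits. Then the induced action of G/N on Ω̄ has fixity at most 2, i.e., no nontrivial element of G/N fixes three or more N-orbits. -/
/-!
Every point of a `g`-invariant `N`-orbit is fixed by some element `g * n` of the coset `gN`
(apply `g⁻¹` to it inside its orbit). All `|N|` elements of `gN` are nontrivial, so together they
fix at most `2 |N|` points, while, `N` acting semiregularly, `m` invariant orbits contain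
`m |N|` points.
-/

open MulAction Pointwise

section

variable {G Ω : Type*} [Group G] [MulAction G Ω] {N : Subgroup G}

lemma exists_mul_smul_eq_of_smul_orbit_eq {g : G} {ω : Ω} (hg : g • orbit N ω = orbit N ω) :
    ∃ n ∈ N, (g * n) • ω = ω := by
  have : g⁻¹ • ω ∈ orbit N ω := by
    rw [← inv_smul_eq_iff.mpr hg.symm]
    exact Set.smul_mem_smul_set (mem_orbit_self ω)
  obtain ⟨n, hn⟩ := this
  have hn : (n : G) • ω = g⁻¹ • ω := hn
  exact ⟨n, n.2, by rw [mul_smul, hn, smul_inv_smul]⟩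

namespace IsSemiregular

lemma smul_left_injective (hN : IsSemiregular G Ω N) (ω : Ω) :
    Function.Injective fun n : N => n • ω := by
  intro n m h
  by_contra hne
  refine hN _ (m⁻¹ * n).2 (by simpa [inv_mul_eq_one, eq_comm] using hne) ω ?_
  have h' : (n : G) • ω = (m : G) • ω := h
  rw [Subgroup.coe_mul, mul_smul, h', Subgroup.coe_inv, inv_smul_smul]

lemma ncard_orbit (hN : IsSemiregular G Ω N) (ω : Ω) : (orbit N ω).ncard = Nat.card N :=
  Set.ncard_range_of_injective (hN.smul_left_injective ω)

lemma ncard_sUnion_of_isOrbitOf [Finite Ω] (hN : IsSemiregular G Ω N) {S : Set (Set Ω)}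
    (hS : ∀ s ∈ S, IsOrbitOf G Ω N s) : (⋃₀ S).ncard = S.ncard * Nat.card N := by
  have hdisj : Pairwise fun s t : S => Disjoint (s : Set Ω) t := by
    rintro ⟨s, hs⟩ ⟨t, ht⟩ hne
    obtain ⟨ω, rfl⟩ := hS s hs
    obtain ⟨ω', rfl⟩ := hS t ht
    refine Set.disjoint_left.mpr fun x hx hx' => hne (Subtype.ext ?_)
    exact (orbit_eq_iff.mpr hx).symm.trans (orbit_eq_iff.mpr hx')
  have hcard : ∀ s : S, (s : Set Ω).ncard = Nat.card N := by
    rintro ⟨s, hs⟩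
    obtain ⟨ω, rfl⟩ := hS s hs
    exact hN.ncard_orbit ω
  have := Fintype.ofFinite S
  rw [Set.sUnion_eq_iUnion, Set.ncard_iUnion_of_finite (fun _ => Set.toFinite _) hdisj]
  simp only [hcard, finsum_eq_sum_of_fintype, Finset.sum_const, Finset.card_univ, smul_eq_mul,
    ← Nat.card_eq_fintype_card, Nat.card_coe_set_eq]

theorem ncard_invariant_orbits_le [Finite Ω] [Finite N] (hN : IsSemiregular G Ω N) {k : ℕ}
    (hfix : ∀ g : G, g ≠ 1 → (fixedBy Ω g).ncard ≤ k) {g : G} (hg : g ∉ N) :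
    {s : Set Ω | IsOrbitOf G Ω N s ∧ g • s = s}.ncard ≤ k := by
  set S := {s : Set Ω | IsOrbitOf G Ω N s ∧ g • s = s}
  have := Fintype.ofFinite N
  have hcover : ⋃₀ S ⊆ ⋃ n : N, fixedBy Ω (g * n) := by
    rintro ω ⟨s, ⟨⟨ω₀, rfl⟩, hgs⟩, hω⟩
    rw [← orbit_eq_iff.mpr hω] at hgs
    obtain ⟨n, hn, hfixed⟩ := exists_mul_smul_eq_of_smul_orbit_eq hgs
    exact Set.mem_iUnion.mpr ⟨⟨n, hn⟩, hfixed⟩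
  have hne : ∀ n : N, g * n ≠ 1 := fun n h =>
    hg (eq_inv_of_mul_eq_one_left h ▸ inv_mem n.2)
  have : S.ncard * Nat.card N ≤ k * Nat.card N := calc
    S.ncard * Nat.card N = (⋃₀ S).ncard := (hN.ncard_sUnion_of_isOrbitOf fun s hs => hs.1).symm
    _ ≤ (⋃ n : N, fixedBy Ω (g * n)).ncard := Set.ncard_le_ncard hcover
    _ ≤ ∑ n : N, (fixedBy Ω (g * n)).ncard := Set.ncard_iUnion_le_of_fintype _
    _ ≤ ∑ _n : N, k := Finset.sum_le_sum fun n _ => hfix _ (hne n)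
    _ = k * Nat.card N := by simp [mul_comm]
  exact Nat.le_of_mul_le_mul_right this Nat.card_pos

end IsSemiregular

end

theorem stmt_4_general (G Ω : Type*) [Group G] [Finite G] [MulAction G Ω] [Finite Ω]
    (hfix : HasFixity G Ω 2)
    (N : Subgroup G) (hsemi : IsSemiregular G Ω N) :
    ∀ g : G, g ∉ N → {s : Set Ω | IsOrbitOf G Ω N s ∧ g • s = s}.ncard ≤ 2 :=
  fun _ hg => hsemi.ncard_invariant_orbits_le hfix.1 hg

theorem stmt_4 (G Ω : Type*) [Group G] [Finite G] [MulAction G Ω] [Finite Ω]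
    [FaithfulSMul G Ω] [IsPretransitive G Ω] (hfix : HasFixity G Ω 2)
    (N : Subgroup G) (hmin : IsMinimalNormal G N) (hab : ∀ x ∈ N, ∀ y ∈ N, x * y = y * x)
    (hsemi : IsSemiregular G Ω N) :
    ∀ g : G, g ∉ N → {s : Set Ω | IsOrbitOf G Ω N s ∧ g • s = s}.ncard ≤ 2 :=
  stmt_4_general G Ω hfix N hsemi
end

section
/- Let G be a finite group acting transitively and faithfully with fixity 2 on a finite set Ω, let N be an abelian minimal normal subgroup acting semi-regularly on Ω, and suppose g ∈ G \ N is such that the image ḡ in G/N fixes exactly two N-orbits. Then either g fixes a unique point on each of these two N-orbits, or N = Z(G) has order 2. -/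
open MulAction Pointwise

section Aux
variable {G Ω : Type*} [Group G] [MulAction G Ω]

lemma aux_three_fix [Finite Ω] (hfix : HasFixity G Ω 2) {h : G} (hh : h ≠ 1)
    {a b c : Ω} (hab : a ≠ b) (hac : a ≠ c) (hbc : b ≠ c)
    (ha : h • a = a) (hb : h • b = b) (hc : h • c = c) : False := by
  have hsub : ({a, b, c} : Set Ω) ⊆ fixedBy Ω h := by
    intro x hx
    rcases hx with rfl | rfl | rfl
    · exact ha
    · exact hb
    · exact hc
  have h3 : ({a, b, c} : Set Ω).ncard = 3 := by
    rw [Set.ncard_insert_of_notMem (by simp [hab, hac]), Set.ncard_pair hbc]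
  have hle := Set.ncard_le_ncard hsub (Set.toFinite _)
  have := hfix.1 h hh
  omega

lemma aux_smul_orbit {N : Subgroup G} (hN : N.Normal) (g : G) (ω : Ω) :
    g • (orbit N ω : Set Ω) = orbit N (g • ω) := by
  ext x
  constructor
  · rintro ⟨y, hy, rfl⟩
    obtain ⟨⟨n, hn⟩, rfl⟩ := MulAction.mem_orbit_iff.mp hy
    have : g • ((⟨n, hn⟩ : N) • ω) = (g * n * g⁻¹) • (g • ω) := by
      show g • (n • ω) = _
      rw [smul_smul, smul_smul]
      congr 1
      group
    show g • ((⟨n, hn⟩ : N) • ω) ∈ _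
    rw [this]
    exact MulAction.mem_orbit_iff.mpr ⟨⟨g * n * g⁻¹, hN.conj_mem n hn g⟩, rfl⟩
  · intro hx
    obtain ⟨⟨n, hn⟩, rfl⟩ := MulAction.mem_orbit_iff.mp hx
    have hmem : g⁻¹ * n * g ∈ N := by
      have := hN.conj_mem n hn g⁻¹
      rwa [inv_inv] at this
    refine Set.mem_smul_set.mpr ⟨(⟨g⁻¹ * n * g, hmem⟩ : N) • ω, MulAction.mem_orbit _ _, ?_⟩
    show g • ((g⁻¹ * n * g) • ω) = (⟨n, hn⟩ : N) • (g • ω)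
    show _ = n • (g • ω)
    rw [smul_smul, smul_smul]
    congr 1
    group

end Aux

set_option maxHeartbeats 2000000 in
theorem stmt_5 (G Ω : Type*) [Group G] [Finite G] [MulAction G Ω] [Finite Ω]
    [FaithfulSMul G Ω] [IsPretransitive G Ω] (hfix : HasFixity G Ω 2)
    (N : Subgroup G) (hmin : IsMinimalNormal G N) (hab : ∀ x ∈ N, ∀ y ∈ N, x * y = y * x)
    (hsemi : IsSemiregular G Ω N) (g : G) (hg : g ∉ N)
    (s t : Set Ω) (hst : s ≠ t)
    (hfixorb : {u : Set Ω | IsOrbitOf G Ω N u ∧ g • u = u} = {s, t}) :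
    ((∃! ω : Ω, ω ∈ s ∧ g • ω = ω) ∧ (∃! ω : Ω, ω ∈ t ∧ g • ω = ω)) ∨
      (N = Subgroup.center G ∧ Nat.card N = 2) := by
  obtain ⟨hN, hNbot, hNmin⟩ := hmin
  letI : CommGroup N := { (inferInstance : Group N) with
    mul_comm := fun a b => Subtype.ext (hab a a.2 b b.2) }
  have hfix1 : ∀ n ∈ N, ∀ ω : Ω, n • ω = ω → n = 1 := by
    intro n hn ω hω
    by_contra h1
    exact hsemi n hn h1 ω hω
  have hs : IsOrbitOf G Ω N s ∧ g • s = s := by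
    have : s ∈ {u : Set Ω | IsOrbitOf G Ω N u ∧ g • u = u} := by
      rw [hfixorb]; exact Set.mem_insert _ _
    exact this
  have ht : IsOrbitOf G Ω N t ∧ g • t = t := by
    have : t ∈ {u : Set Ω | IsOrbitOf G Ω N u ∧ g • u = u} := by
      rw [hfixorb]; exact Set.mem_insert_iff.mpr (Or.inr rfl)
    exact this
  obtain ⟨α, hsα⟩ := hs.1
  obtain ⟨β, htβ⟩ := ht.1
  have hαs : α ∈ s := hsα ▸ MulAction.mem_orbit_self α
  have hβt : β ∈ t := htβ ▸ MulAction.mem_orbit_self β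
  have hgαs : g • α ∈ s := by rw [← hs.2]; exact Set.smul_mem_smul_set hαs
  have hgβt : g • β ∈ t := by rw [← ht.2]; exact Set.smul_mem_smul_set hβt
  obtain ⟨M₀, hM₀⟩ := MulAction.mem_orbit_iff.mp (hsα ▸ hgαs)
  obtain ⟨M₁, hM₁⟩ := MulAction.mem_orbit_iff.mp (htβ ▸ hgβt)
  have hα' : g • α = (M₀ : G) • α := hM₀.symm
  have hβ' : g • β = (M₁ : G) • β := hM₁.symm
  -- the conjugation homomorphism and φ
  have conjmem : ∀ n : N, g * (n : G) * g⁻¹ ∈ N := fun n => hN.conj_mem n n.2 g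
  let c : N →* N := MonoidHom.mk' (fun n => ⟨g * (n : G) * g⁻¹, conjmem n⟩)
    (by
      intro a b
      apply Subtype.ext
      show g * ((a * b : N) : G) * g⁻¹ = (g * (a : G) * g⁻¹) * (g * (b : G) * g⁻¹)
      push_cast
      group)
  let φ : N →* N := MonoidHom.mk' (fun n => n⁻¹ * c n)
    (by
      intro a b
      show (a * b)⁻¹ * c (a * b) = (a⁻¹ * c a) * (b⁻¹ * c b)
      rw [map_mul, mul_inv]
      exact mul_mul_mul_comm a⁻¹ b⁻¹ (c a) (c b))
  have φdef : ∀ n : N, ((φ n : N) : G) = (n : G)⁻¹ * (g * (n : G) * g⁻¹) := fun n => rfl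
  -- key fixed point criterion
  have key : ∀ (γ : Ω) (Mγ : N), g • γ = (Mγ : G) • γ → ∀ (n₀ m : N),
      (((n₀ : G) * g) • ((m : G) • γ) = (m : G) • γ ↔ φ m = Mγ⁻¹ * n₀⁻¹) := by
    intro γ Mγ hMγ n₀ m
    have e4 : ((n₀ : G) * g) • ((m : G) • γ)
        = ((n₀ : G) * (g * (m : G) * g⁻¹) * (Mγ : G)) • γ := by
      calc ((n₀ : G) * g) • ((m : G) • γ) = ((n₀ : G) * g * (m : G)) • γ := by
            rw [smul_smul]
        _ = ((n₀ : G) * (g * (m : G) * g⁻¹)) • (g • γ) := by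
            rw [smul_smul]; congr 1; group
        _ = ((n₀ : G) * (g * (m : G) * g⁻¹) * (Mγ : G)) • γ := by
            rw [hMγ, smul_smul]
    rw [e4]
    have hAval : ((m⁻¹ * (n₀ * c m * Mγ) : N) : G)
        = (m : G)⁻¹ * ((n₀ : G) * (g * (m : G) * g⁻¹) * (Mγ : G)) := by
      push_cast
      rfl
    have cancel : (((n₀ : G) * (g * (m : G) * g⁻¹) * (Mγ : G)) • γ = (m : G) • γ)
        ↔ ((m⁻¹ * (n₀ * c m * Mγ) : N) : G) • γ = γ := by
      rw [hAval]
      constructor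
      · intro h
        rw [mul_smul, h, inv_smul_smul]
      · intro h
        have h2 : (m : G) • (((m : G)⁻¹ * ((n₀ : G) * (g * (m : G) * g⁻¹) * (Mγ : G))) • γ)
            = (m : G) • γ := by rw [h]
        rwa [smul_smul, mul_inv_cancel_left] at h2
    rw [cancel]
    have semA : ((m⁻¹ * (n₀ * c m * Mγ) : N) : G) • γ = γ ↔ (m⁻¹ * (n₀ * c m * Mγ) : N) = 1 := by
      constructor
      · intro h
        exact Subtype.ext (hfix1 _ (m⁻¹ * (n₀ * c m * Mγ) : N).2 γ h)
      · intro h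
        rw [h]
        exact one_smul G γ
    rw [semA]
    have hAeq : (m⁻¹ * (n₀ * c m * Mγ) : N) = (n₀ * Mγ) * φ m := by
      show m⁻¹ * (n₀ * c m * Mγ) = (n₀ * Mγ) * (m⁻¹ * c m)
      rw [mul_comm m⁻¹ (n₀ * c m * Mγ)]
      rw [mul_comm n₀ (c m)] -- (c m * n₀ * Mγ) * m⁻¹
      rw [mul_assoc (c m) n₀ Mγ, mul_assoc (c m) (n₀ * Mγ) m⁻¹]
      rw [mul_comm (c m) ((n₀ * Mγ) * m⁻¹)]
      rw [mul_assoc (n₀ * Mγ) m⁻¹ (c m)]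
    rw [hAeq, mul_eq_one_iff_inv_eq, mul_inv_rev, eq_comm]
  -- fixed points of elements of Ng lie in s ∪ t
  have fixmem : ∀ (n₀ : N) (ω : Ω), ((n₀ : G) * g) • ω = ω → ω ∈ s ∪ t := by
    intro n₀ ω hω
    have hgω : g • ω ∈ orbit N ω := by
      have h1 : (n₀ : G)⁻¹ • (((n₀ : G) * g) • ω) = (n₀ : G)⁻¹ • ω := by rw [hω]
      rw [smul_smul, inv_mul_cancel_left] at h1
      rw [h1]
      exact MulAction.mem_orbit_iff.mpr ⟨⟨(n₀ : G)⁻¹, inv_mem n₀.2⟩, rfl⟩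
    have horb : orbit N ω ∈ {u : Set Ω | IsOrbitOf G Ω N u ∧ g • u = u} := by
      refine ⟨⟨ω, rfl⟩, ?_⟩
      rw [aux_smul_orbit hN g ω, MulAction.orbit_eq_iff.mpr hgω]
    rw [hfixorb] at horb
    have hωo : ω ∈ orbit N ω := MulAction.mem_orbit_self ω
    rcases horb with h | h
    · exact Or.inl (h ▸ hωo)
    · exact Or.inr (h ▸ hωo)
  have hdisj : ∀ ω : Ω, ω ∈ s → ω ∈ t → False := by
    intro ω h1 h2
    apply hst
    rw [hsα] at h1 ⊢
    rw [htβ] at h2 ⊢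
    rw [← MulAction.orbit_eq_iff.mpr h1, ← MulAction.orbit_eq_iff.mpr h2]
  have pairfix : ∀ (z' : G), z' ∈ N → g * z' = z' * g → ∀ (n₀ : N) (ω : Ω),
      ((n₀ : G) * g) • ω = ω → ((n₀ : G) * g) • (z' • ω) = z' • ω := by
    intro z' hz'N hz'g n₀ ω hω
    have comm : ((n₀ : G) * g) * z' = z' * ((n₀ : G) * g) := by
      calc ((n₀ : G) * g) * z' = (n₀ : G) * (g * z') := by group
        _ = (n₀ : G) * (z' * g) := by rw [hz'g]
        _ = ((n₀ : G) * z') * g := by group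
        _ = (z' * (n₀ : G)) * g := by rw [hab _ n₀.2 z' hz'N]
        _ = z' * ((n₀ : G) * g) := by group
    rw [smul_smul, comm, mul_smul, hω]
  by_cases hzex : ∃ z ∈ N, z ≠ 1 ∧ g * z = z * g
  · -- there is a nontrivial element of N commuting with g
    obtain ⟨z, hzN, hz1, hzg⟩ := hzex
    right
    set Z : N := ⟨z, hzN⟩ with hZdef
    have hzfree : ∀ ω : Ω, z • ω ≠ ω := fun ω h => hz1 (hfix1 z hzN ω h)
    have hne1 : ∀ n₀ : N, (n₀ : G) * g ≠ 1 := by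
      intro n₀ h
      apply hg
      have h2 : g = (n₀ : G)⁻¹ := eq_inv_of_mul_eq_one_right h
      rw [h2]
      exact inv_mem n₀.2
    have fixpair : ∀ (n₀ : N) (ω : Ω), ((n₀ : G) * g) • ω = ω →
        fixedBy Ω ((n₀ : G) * g) = {ω, z • ω} := by
      intro n₀ ω hω
      apply Set.eq_of_subset_of_subset
      · intro x hx
        by_contra hxmem
        simp only [Set.mem_insert_iff, Set.mem_singleton_iff, not_or] at hxmem
        exact aux_three_fix hfix (hne1 n₀) (fun h => hzfree ω h.symm) (Ne.symm hxmem.1)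
          (Ne.symm hxmem.2) hω (pairfix z hzN hzg n₀ ω hω) hx
      · intro x hx
        rcases hx with rfl | rfl
        · exact hω
        · exact pairfix z hzN hzg n₀ ω hω
    have h₀fix : (((M₀⁻¹ : N) : G) * g) • α = α := by
      have : ((M₀⁻¹ : N) : G) = (M₀ : G)⁻¹ := rfl
      rw [this, mul_smul, hα', inv_smul_smul]
    have hβfix : (((M₁⁻¹ : N) : G) * g) • β = β := by
      have : ((M₁⁻¹ : N) : G) = (M₁ : G)⁻¹ := rfl
      rw [this, mul_smul, hβ', inv_smul_smul]
    have hfp0 : fixedBy Ω (((M₀⁻¹ : N) : G) * g) = {α, z • α} := fixpair M₀⁻¹ α h₀fix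
    have ccomm : ∀ (c' : G), c' ∈ N → g * c' = c' * g → c' = 1 ∨ c' = z := by
      intro c' hc' hcg
      have hmem : c' • α ∈ fixedBy Ω (((M₀⁻¹ : N) : G) * g) :=
        pairfix c' hc' hcg M₀⁻¹ α h₀fix
      rw [hfp0] at hmem
      rcases hmem with h | h
      · exact Or.inl (hfix1 c' hc' α h)
      · right
        have h2 : (z⁻¹ * c') • α = α := by
          rw [mul_smul, h, inv_smul_smul]
        have h3 : z⁻¹ * c' = 1 := hfix1 _ (mul_mem (inv_mem hzN) hc') α h2
        calc c' = z * (z⁻¹ * c') := by group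
          _ = z := by rw [h3, mul_one]
    have hz2 : z * z = 1 := by
      have hcomm : g * (z * z) = (z * z) * g := by
        calc g * (z * z) = (g * z) * z := by group
          _ = (z * g) * z := by rw [hzg]
          _ = z * (g * z) := by group
          _ = z * (z * g) := by rw [hzg]
          _ = (z * z) * g := by group
      rcases ccomm (z * z) (mul_mem hzN hzN) hcomm with h | h
      · exact h
      · exfalso
        apply hz1
        have : z * z = z * 1 := by rw [h, mul_one]
        exact mul_left_cancel this
    -- kernel of φ is {1, Z}
    have hker : ∀ m : N, φ m = 1 → m = 1 ∨ m = Z := by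
      intro m hm
      have h' : (m : G)⁻¹ * (g * (m : G) * g⁻¹) = 1 := by
        rw [← φdef m, hm]; rfl
      have e : g * (m : G) * g⁻¹ = (m : G) := by
        calc g * (m : G) * g⁻¹ = (m : G) * ((m : G)⁻¹ * (g * (m : G) * g⁻¹)) := by group
          _ = (m : G) := by rw [h', mul_one]
      have hcomm : g * (m : G) = (m : G) * g := by
        calc g * (m : G) = (g * (m : G) * g⁻¹) * g := by group
          _ = (m : G) * g := by rw [e]
      rcases ccomm (m : G) m.2 hcomm with h | h
      · exact Or.inl (Subtype.ext h)
      · exact Or.inr (Subtype.ext h)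
    have hZker : φ Z = 1 := by
      apply Subtype.ext
      rw [φdef]
      show z⁻¹ * (g * z * g⁻¹) = 1
      rw [hzg]
      group
    have hZ1 : Z ≠ 1 := fun h => hz1 (congrArg Subtype.val h)
    have hkerset : (φ.ker : Set N) = {1, Z} := by
      ext m
      simp only [SetLike.mem_coe, MonoidHom.mem_ker, Set.mem_insert_iff, Set.mem_singleton_iff]
      constructor
      · exact hker m
      · rintro (rfl | rfl)
        · exact map_one φ
        · exact hZker
    have hkercard : Nat.card φ.ker = 2 := by
      have e0 : Nat.card φ.ker = ((φ.ker : Set N)).ncard := by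
        rw [← Nat.card_coe_set_eq]
        rfl
      rw [e0, hkerset, Set.ncard_pair (Ne.symm hZ1)]
    have hindex : φ.range.index = 2 := by
      have h1 := Subgroup.card_mul_index φ.range
      have h2 := Subgroup.card_mul_index φ.ker
      have h3 := Subgroup.index_ker φ
      rw [h3, hkercard] at h2
      have hpos : 0 < Nat.card φ.range := Nat.card_pos
      exact Nat.eq_of_mul_eq_mul_left hpos (h1.trans (by omega))
    -- M₀⁻¹ * M₁ is not in the range of φ
    have hM01 : M₀⁻¹ * M₁ ∉ φ.range := by
      rintro ⟨m, hm⟩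
      have hf1 : (((M₁⁻¹ : N) : G) * g) • ((m : G) • α) = (m : G) • α :=
        (key α M₀ hα' M₁⁻¹ m).mpr (by rw [hm, inv_inv])
      have hmαs : (m : G) • α ∈ s := by
        rw [hsα]
        exact MulAction.mem_orbit α m
      have hzβt : z • β ∈ t := by
        rw [htβ]
        exact MulAction.mem_orbit β Z
      exact aux_three_fix hfix (hne1 M₁⁻¹)
        (fun h => hdisj _ (h ▸ hmαs) hβt)
        (fun h => hdisj _ (h ▸ hmαs) hzβt)
        (fun h => hzfree β h.symm)
        hf1 hβfix (pairfix z hzN hzg M₁⁻¹ β hβfix)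
    -- every element of the coset Ng has a fixed point
    have allfix : ∀ n₀ : N, ∃ ω : Ω, ((n₀ : G) * g) • ω = ω := by
      intro n₀
      have hxy : (M₀⁻¹ * n₀⁻¹) * ((M₁⁻¹ * n₀⁻¹)⁻¹) ∉ φ.range := by
        have he : (M₀⁻¹ * n₀⁻¹) * ((M₁⁻¹ * n₀⁻¹)⁻¹) = M₀⁻¹ * M₁ := by
          group
        rw [he]
        exact hM01
      have hiff := Subgroup.mul_mem_iff_of_index_two hindex
        (a := M₀⁻¹ * n₀⁻¹) (b := (M₁⁻¹ * n₀⁻¹)⁻¹)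
      by_cases hin : M₀⁻¹ * n₀⁻¹ ∈ φ.range
      · obtain ⟨m, hm⟩ := hin
        exact ⟨(m : G) • α, (key α M₀ hα' n₀ m).mpr hm⟩
      · have hin2 : M₁⁻¹ * n₀⁻¹ ∈ φ.range := by
          by_contra h2
          apply hxy
          apply hiff.mpr
          constructor
          · intro h; exact absurd h hin
          · intro h
            exact absurd ((inv_mem_iff (x := M₁⁻¹ * n₀⁻¹)).mp h) h2
        obtain ⟨m, hm⟩ := hin2
        exact ⟨(m : G) • β, (key β M₁ hβ' n₀ m).mpr hm⟩
    -- every element of the coset Ng is an involution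
    have sqone : ∀ n₀ : N, ((n₀ : G) * g) * ((n₀ : G) * g) = 1 := by
      intro n₀
      obtain ⟨ω, hω⟩ := allfix n₀
      have hhz : ((n₀ : G) * g) * z = ((n₀ * Z : N) : G) * g := by
        push_cast
        calc (n₀ : G) * g * z = (n₀ : G) * (g * z) := by group
          _ = (n₀ : G) * (z * g) := by rw [hzg]
          _ = (n₀ : G) * z * g := by group
      obtain ⟨δ, hδ⟩ := allfix (n₀ * Z)
      have hδ' : (((n₀ : G) * g) * z) • δ = δ := by rw [hhz]; exact hδ
      have hswap1 : (((n₀ : G) * g) * z) • ω = z • ω := by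
        rw [mul_smul]
        exact pairfix z hzN hzg n₀ ω hω
      have hswap2 : (((n₀ : G) * g) * z) • (z • ω) = ω := by
        have hzz : z • z • ω = ω := by rw [smul_smul, hz2, one_smul]
        rw [mul_smul, hzz]
        exact hω
      have hδω : δ ≠ ω := by
        intro h'
        rw [h'] at hδ'
        rw [hswap1] at hδ'
        exact hzfree ω hδ'
      have hδzω : δ ≠ z • ω := by
        intro h'
        rw [h'] at hδ'
        rw [hswap2] at hδ'
        exact hzfree ω hδ'.symm
      have hcommz : ((n₀ : G) * g) * z = z * ((n₀ : G) * g) := by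
        calc ((n₀ : G) * g) * z = (n₀ : G) * (g * z) := by group
          _ = (n₀ : G) * (z * g) := by rw [hzg]
          _ = ((n₀ : G) * z) * g := by group
          _ = (z * (n₀ : G)) * g := by rw [hab _ n₀.2 z hzN]
          _ = z * ((n₀ : G) * g) := by group
      have hsq : ((n₀ : G) * g) * ((n₀ : G) * g)
          = (((n₀ : G) * g) * z) * (((n₀ : G) * g) * z) := by
        calc ((n₀ : G) * g) * ((n₀ : G) * g)
            = (((n₀ : G) * g) * ((n₀ : G) * g)) * (z * z) := by rw [hz2, mul_one]
          _ = ((n₀ : G) * g) * (((n₀ : G) * g) * z) * z := by group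
          _ = ((n₀ : G) * g) * (z * ((n₀ : G) * g)) * z := by rw [hcommz]
          _ = (((n₀ : G) * g) * z) * (((n₀ : G) * g) * z) := by group
      by_contra hne
      apply aux_three_fix hfix hne (a := ω) (b := z • ω) (c := δ)
        (fun h' => hzfree ω h'.symm) (Ne.symm hδω) (Ne.symm hδzω)
      · rw [mul_smul, hω, hω]
      · rw [mul_smul, pairfix z hzN hzg n₀ ω hω, pairfix z hzN hzg n₀ ω hω]
      · rw [hsq, mul_smul, hδ', hδ']
    have gg1 : g * g = 1 := by
      have h1 := sqone 1
      rw [OneMemClass.coe_one, one_mul] at h1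
      exact h1
    have hginv : g⁻¹ = g := inv_eq_of_mul_eq_one_right gg1
    have conjinv : ∀ n ∈ N, g * n * g⁻¹ = n⁻¹ := by
      intro n hn
      have h1 := sqone ⟨n, hn⟩
      have h2 : n * (g * n * g) = 1 := by
        calc n * (g * n * g) = ((n : G) * g) * (n * g) := by group
          _ = 1 := h1
      have h3 : g * n * g = n⁻¹ := by
        calc g * n * g = n⁻¹ * (n * (g * n * g)) := by group
          _ = n⁻¹ := by rw [h2, mul_one]
      rw [hginv]
      exact h3
    -- the subgroup of elements of order dividing 2 in N equals N
    let M : Subgroup G :=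
      { carrier := {x | x ∈ N ∧ x * x = 1}
        one_mem' := ⟨N.one_mem, one_mul 1⟩
        mul_mem' := by
          rintro a b ⟨haN, ha⟩ ⟨hbN, hb⟩
          refine ⟨mul_mem haN hbN, ?_⟩
          have hc := hab a haN b hbN
          calc a * b * (a * b) = a * (b * a) * b := by group
            _ = a * (a * b) * b := by rw [← hc]
            _ = (a * a) * (b * b) := by group
            _ = 1 := by rw [ha, hb, one_mul]
        inv_mem' := by
          rintro a ⟨haN, ha⟩
          exact ⟨inv_mem haN, by rw [← mul_inv_rev, ha, inv_one]⟩ }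
    have hMnormal : M.Normal := by
      constructor
      intro a ha x
      refine ⟨hN.conj_mem a ha.1 x, ?_⟩
      calc (x * a * x⁻¹) * (x * a * x⁻¹) = x * (a * a) * x⁻¹ := by group
        _ = 1 := by rw [ha.2, mul_one, mul_inv_cancel]
    have hMN : M = N := by
      rcases hNmin M hMnormal (fun x hx => hx.1) with h | h
      · exfalso
        have hzM : z ∈ M := ⟨hzN, hz2⟩
        rw [h] at hzM
        exact hz1 (Subgroup.mem_bot.mp hzM)
      · exact h
    have hNsq : ∀ n ∈ N, n * n = 1 := by
      intro n hn
      have : n ∈ M := by rw [hMN]; exact hn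
      exact this.2
    have hNsub : ∀ n ∈ N, n = 1 ∨ n = z := by
      intro n hn
      have hinv : (n : G)⁻¹ = n := inv_eq_of_mul_eq_one_right (hNsq n hn)
      have hci := conjinv n hn
      rw [hinv] at hci
      have hcomm : g * n = n * g := by
        calc g * n = (g * n * g⁻¹) * g := by group
          _ = n * g := by rw [hci]
      exact ccomm n hn hcomm
    have hNset : (N : Set G) = {1, z} := by
      ext x
      simp only [SetLike.mem_coe, Set.mem_insert_iff, Set.mem_singleton_iff]
      constructor
      · exact hNsub x
      · rintro (rfl | rfl)
        · exact N.one_mem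
        · exact hzN
    have hNcard : Nat.card N = 2 := by
      have e0 : Nat.card N = ((N : Set G)).ncard := by
        rw [← Nat.card_coe_set_eq]
        rfl
      rw [e0, hNset, Set.ncard_pair (Ne.symm hz1)]
    have hzcent : ∀ x : G, x * z = z * x := by
      intro x
      have hconj : x * z * x⁻¹ ∈ N := hN.conj_mem z hzN x
      rcases hNsub _ hconj with h | h
      · exfalso
        apply hz1
        calc z = x⁻¹ * (x * z * x⁻¹) * x := by group
          _ = 1 := by rw [h]; group
      · calc x * z = (x * z * x⁻¹) * x := by group
          _ = z * x := by rw [h]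
    have hcentfix : ∀ c' : G, (∀ x : G, c' * x = x * c') → ∀ ω : Ω, c' • ω = ω → c' = 1 := by
      intro c' hc ω hω
      apply eq_of_smul_eq_smul (α := Ω)
      intro δ
      obtain ⟨x, hx⟩ := MulAction.exists_smul_eq G ω δ
      rw [one_smul, ← hx, smul_smul, hc x, mul_smul, hω]
    constructor
    · ext x
      rw [Subgroup.mem_center_iff]
      constructor
      · intro hxN y
        rcases hNsub x hxN with rfl | rfl
        · rw [one_mul, mul_one]
        · exact hzcent y
      · intro hx
        have hxfix : (((M₀⁻¹ : N) : G) * g) • (x • α) = x • α := by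
          rw [smul_smul, hx _, mul_smul, h₀fix]
        have hmem : x • α ∈ fixedBy Ω (((M₀⁻¹ : N) : G) * g) :=
          MulAction.mem_fixedBy.mpr hxfix
        rw [hfp0] at hmem
        rcases hmem with h | h
        · have hx1 : x = 1 := hcentfix x (fun y => (hx y).symm) α h
          rw [hx1]
          exact N.one_mem
        · have hfix' : (z⁻¹ * x) • α = α := by
            rw [mul_smul, h, inv_smul_smul]
          have hcomm' : ∀ y : G, (z⁻¹ * x) * y = y * (z⁻¹ * x) := by
            intro y
            have h1 : z⁻¹ * y = y * z⁻¹ := by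
              calc z⁻¹ * y = z⁻¹ * (y * z) * z⁻¹ := by group
                _ = z⁻¹ * (z * y) * z⁻¹ := by rw [hzcent y]
                _ = y * z⁻¹ := by group
            calc (z⁻¹ * x) * y = z⁻¹ * (x * y) := by group
              _ = z⁻¹ * (y * x) := by rw [← hx y]
              _ = (z⁻¹ * y) * x := by group
              _ = (y * z⁻¹) * x := by rw [h1]
              _ = y * (z⁻¹ * x) := by group
          have hzx1 : z⁻¹ * x = 1 := hcentfix _ hcomm' α hfix'
          have hxz : x = z := by
            calc x = z * (z⁻¹ * x) := by group
              _ = z := by rw [hzx1, mul_one]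
          rw [hxz]
          exact hzN
    · exact hNcard
  · -- C_N(g) is trivial : first alternative
    push_neg at hzex
    have hCtriv : ∀ m : N, φ m = 1 → m = 1 := by
      intro m hm
      have h' : (m : G)⁻¹ * (g * (m : G) * g⁻¹) = 1 := by
        rw [← φdef m, hm]
        rfl
      have e : g * (m : G) * g⁻¹ = (m : G) := by
        calc g * (m : G) * g⁻¹ = (m : G) * ((m : G)⁻¹ * (g * (m : G) * g⁻¹)) := by group
          _ = (m : G) := by rw [h', mul_one]
      have hcomm : g * (m : G) = (m : G) * g := by
        calc g * (m : G) = (g * (m : G) * g⁻¹) * g := by group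
          _ = (m : G) * g := by rw [e]
      by_contra hm1
      exact hzex (m : G) m.2 (fun hh => hm1 (Subtype.ext hh)) hcomm
    have hinj : Function.Injective φ := (injective_iff_map_eq_one φ).mpr hCtriv
    have hsurj : Function.Surjective φ := Finite.injective_iff_surjective.mp hinj
    left
    have part : ∀ (γ : Ω) (Mγ : N), g • γ = (Mγ : G) • γ →
        ∃! ω : Ω, ω ∈ orbit N γ ∧ g • ω = ω := by
      intro γ Mγ hMγ
      obtain ⟨m, hm⟩ := hsurj (Mγ⁻¹ * 1⁻¹)
      have hfixm : g • ((m : G) • γ) = (m : G) • γ := by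
        have h1 : (((1 : N) : G) * g) • ((m : G) • γ) = (m : G) • γ :=
          (key γ Mγ hMγ 1 m).mpr hm
        rwa [OneMemClass.coe_one, one_mul] at h1
      refine ⟨(m : G) • γ, ⟨MulAction.mem_orbit γ m, hfixm⟩, ?_⟩
      rintro ω' ⟨hω's, hω'fix⟩
      obtain ⟨m', hm'⟩ := MulAction.mem_orbit_iff.mp hω's
      rw [← hm'] at hω'fix ⊢
      have h2 : (((1 : N) : G) * g) • ((m' : G) • γ) = (m' : G) • γ := by
        rw [OneMemClass.coe_one, one_mul]
        exact hω'fix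
      have h3 : φ m' = Mγ⁻¹ * 1⁻¹ := (key γ Mγ hMγ 1 m').mp h2
      have : m' = m := hinj (h3.trans hm.symm)
      rw [this]
      rfl
    constructor
    · exact hsα ▸ part α M₀ hα'
    · exact htβ ▸ part β M₁ hβ'
end

section
/- Let G be a finite group acting transitively and faithfully with fixity 2 on a finite set Ω, and let N be an abelian minimal normal subgroup acting semi-regularly on Ω such that there are exactly 6 N-orbits. Then G/N is not isomorphic to Sym_4 and not isomorphic to Alt_4. -/
open MulAction Pointwise

/-!
Let `n = |N|`, so `|Ω| = 6n`, and let `ρ` be `G → G/N ≅ Sym₄` or `Alt₄`, with kernel `N`.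

If the image is `Alt₄`, point stabilisers have order `2`, so an element fixing a point lies in
the preimage `M` of the Klein four-group, but not in `N`. Burnside's lemma together with
fixity `2` gives `|G| ≤ |Ω| + 2·#{g ≠ 1 fixing a point}`, which forces these elements to be
exactly `M \ N`. Hence `M \ N` consists of involutions, each of which inverts `N`. If `a`, `b`
and `ab` all lie in `M \ N`, conjugation by `ab` inverts `N` and, as the composite of two
inversions, also centralises it, so `N` has exponent `2`. Then `M` is elementary abelian of
order `4n ≥ 8`, and a nontrivial `u ∈ M` fixing `ω` fixes the whole `M`-orbit of `ω`, which has
at least `4n / 2 > 2` points.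

If the image is `Sym₄`, stabilisers have order `4`. Were they all to map into `Alt₄`, the same
count would fail, so some stabiliser contains an odd element; then the preimage of `Alt₄` is
still transitive and the first case applies to it.
-/

open Equiv

lemma exists_ne_one_ne_one_mul_ne_one {G : Type*} [Group G] [Finite G] (hG : 2 < Nat.card G) :
    ∃ a b : G, a ≠ 1 ∧ b ≠ 1 ∧ a * b ≠ 1 := by
  have : Nontrivial G := Finite.one_lt_card_iff_nontrivial.1 (by omega)
  obtain ⟨a, ha⟩ := exists_ne (1 : G)
  obtain ⟨b, hb1, hba⟩ : ∃ b : G, b ≠ 1 ∧ b ≠ a⁻¹ := by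
    by_contra! h
    have hsub : (Set.univ : Set G) ⊆ {1, a⁻¹} := fun b _ => by
      by_cases hb : b = 1
      · simp [hb]
      · simp [h b hb]
    have hle := Set.ncard_le_ncard hsub
    have hpair := Set.ncard_insert_le (1 : G) {a⁻¹}
    rw [Set.ncard_univ] at hle
    rw [Set.ncard_singleton] at hpair
    omega
  exact ⟨a, b, ha, hb1, fun h => hba (eq_inv_of_mul_eq_one_right h)⟩

section Involutions

variable {G : Type*} [Group G]

lemma mul_comm_of_mul_self_eq_one {a b : G} (ha : a * a = 1) (hb : b * b = 1)
    (hab : a * b * (a * b) = 1) : a * b = b * a := by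
  rw [eq_inv_of_mul_eq_one_left hab, mul_inv_rev, inv_eq_of_mul_eq_one_left ha,
    inv_eq_of_mul_eq_one_left hb]

lemma conj_eq_inv_of_mul_self_eq_one {u x : G} (hu : u * u = 1) (hxu : x * u * (x * u) = 1) :
    u * x * u⁻¹ = x⁻¹ := by
  rw [← mul_eq_one_iff_eq_inv.1 hu]
  exact eq_inv_of_mul_eq_one_right (by rw [← hxu]; group)

lemma inv_eq_self_of_conj_eq_inv {a b x : G} (ha : a * x * a⁻¹ = x⁻¹) (hb : b * x * b⁻¹ = x⁻¹)
    (hab : a * b * x * (a * b)⁻¹ = x⁻¹) : x⁻¹ = x := by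
  calc x⁻¹ = a * (b * x * b⁻¹) * a⁻¹ := by rw [← hab]; group
    _ = (a * x * a⁻¹)⁻¹ := by rw [hb]; group
    _ = x := by rw [ha, inv_inv]

end Involutions

section SurjectiveHom

variable {H P : Type*} [Group H] [Group P] {ρ : H →* P}

lemma card_eq_card_mul_card_ker_of_surjective (hρ : Function.Surjective ρ) :
    Nat.card H = Nat.card P * Nat.card ρ.ker := by
  rw [← ρ.ker.card_mul_index, Subgroup.index_ker, ρ.range_eq_top.2 hρ, Subgroup.card_top,
    mul_comm]

lemma card_comap_mul_index_of_surjective (hρ : Function.Surjective ρ) (V : Subgroup P) :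
    Nat.card (V.comap ρ) * V.index = Nat.card H := by
  rw [← Subgroup.index_comap_of_surjective V hρ, Subgroup.card_mul_index]

lemma ncard_comap_diff_ker [Finite H] (V : Subgroup P) :
    ((V.comap ρ : Set H) \ ρ.ker).ncard = Nat.card (V.comap ρ) - Nat.card ρ.ker := by
  rw [Set.ncard_sdiff (ρ.ker_le_comap V)]
  simp only [← Nat.card_coe_set_eq, SetLike.coe_sort_coe]

lemma ker_comp_mk'_of_mulEquiv {G : Type*} [Group G] {N : Subgroup G} [N.Normal]
    (φ : G ⧸ N ≃* P) : (φ.toMonoidHom.comp (QuotientGroup.mk' N)).ker = N := by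
  ext x
  simp

end SurjectiveHom

section SubgroupComap

variable {H P : Type*} [Group H] [Group P] (ρ : H →* P) (A : Subgroup P)

lemma mem_ker_subgroupComap {x : A.comap ρ} :
    x ∈ (ρ.subgroupComap A).ker ↔ (x : H) ∈ ρ.ker :=
  Subtype.ext_iff

lemma card_ker_subgroupComap : Nat.card (ρ.subgroupComap A).ker = Nat.card ρ.ker := by
  have : (ρ.subgroupComap A).ker = ρ.ker.subgroupOf (A.comap ρ) := by
    ext x
    rw [mem_ker_subgroupComap, Subgroup.mem_subgroupOf]
  rw [this]
  exact Nat.card_congr (Subgroup.subgroupOfEquivOfLe (ρ.ker_le_comap A)).toEquiv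

end SubgroupComap

section KleinFour

open alternatingGroup

lemma mem_kleinFour_of_pow_four_eq_one {a : alternatingGroup (Fin 4)} (ha : a ^ 4 = 1) :
    a ∈ kleinFour (Fin 4) := by
  have h4 : Nat.card (Fin 4) = 4 := by simp
  have hord : orderOf (a : Perm (Fin 4)) ∣ 2 ^ 2 := by
    rw [Subgroup.orderOf_coe]
    exact orderOf_dvd_of_pow_eq_one ha
  rw [← SetLike.mem_coe, coe_kleinFour_of_card_eq_four h4]
  rcases mem_kleinFour_of_order_two_pow h4 a.2 hord with h | h
  · exact Or.inl (Subtype.ext (Perm.cycleType_eq_zero.1 h))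
  · exact Or.inr h

lemma index_kleinFour_fin_four : (kleinFour (Fin 4)).index = 3 := by
  have h := (kleinFour (Fin 4)).card_mul_index
  rw [kleinFour_card_of_card_eq_four (by simp), card_of_card_eq_four (by simp)] at h
  omega

end KleinFour

lemma ncard_setOf_isOrbitOf {G Ω : Type*} [Group G] [MulAction G Ω] (N : Subgroup G) :
    {s : Set Ω | IsOrbitOf G Ω N s}.ncard = Nat.card (orbitRel.Quotient N Ω) := by
  have : {s : Set Ω | IsOrbitOf G Ω N s} = Set.range (orbitRel.Quotient.orbit (G := N)) := by
    ext s
    constructor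
    · rintro ⟨ω, rfl⟩
      exact ⟨⟦ω⟧, orbitRel.Quotient.orbit_mk ω⟩
    · rintro ⟨q, rfl⟩
      induction q using Quotient.inductionOn' with
      | h ω => exact ⟨ω, orbitRel.Quotient.orbit_mk ω⟩
  rw [this, Set.ncard_range_of_injective orbitRel.Quotient.orbit_injective]

lemma IsSemiregular.card_eq {G Ω : Type*} [Group G] [MulAction G Ω] {N : Subgroup G}
    (hN : IsSemiregular G Ω N) :
    Nat.card Ω = Nat.card (orbitRel.Quotient N Ω) * Nat.card N := by
  refine (Nat.card_congr (selfEquivOrbitsQuotientProd (G := N) fun ω => ?_)).trans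
    (Nat.card_prod _ _)
  refine (Subgroup.eq_bot_iff_forall _).2 fun n hn => Subtype.ext ?_
  by_contra h
  exact hN n n.2 h ω hn

def nontrivialFixers (H Ω : Type*) [Group H] [MulAction H Ω] : Set H :=
  {g | g ≠ 1 ∧ (fixedBy Ω g).Nonempty}

section Stabilizers

variable {H Ω : Type*} [Group H] [MulAction H Ω]

lemma card_mul_card_stabilizer [IsPretransitive H Ω] (ω : Ω) :
    Nat.card Ω * Nat.card (stabilizer H ω) = Nat.card H := by
  rw [mul_comm, ← index_stabilizer_of_transitive H ω, Subgroup.card_mul_index]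

lemma pow_card_stabilizer_eq_one {g : H} {ω : Ω} (hg : g • ω = ω) :
    g ^ Nat.card (stabilizer H ω) = 1 :=
  congrArg Subtype.val (pow_card_eq_one' (x := (⟨g, hg⟩ : stabilizer H ω)))

lemma nontrivialFixers_subset {P : Type*} [Group P] {ρ : H →* P} {V : Subgroup P}
    (hsemi : IsSemiregular H Ω ρ.ker) (hV : ∀ (g : H) (ω : Ω), g • ω = ω → ρ g ∈ V) :
    nontrivialFixers H Ω ⊆ (V.comap ρ : Set H) \ ρ.ker := by
  rintro g ⟨hg, ω, hω⟩
  exact ⟨hV g ω hω, fun hK => hsemi g hK hg ω hω⟩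

variable [Finite Ω] (hfix : ∀ g : H, g ≠ 1 → (fixedBy Ω g).ncard ≤ 2)
include hfix

lemma card_le_card_add_two_mul_ncard_nontrivialFixers [Finite H] [Nonempty Ω] :
    Nat.card H ≤ Nat.card Ω + 2 * (nontrivialFixers H Ω).ncard := by
  classical
  have := Fintype.ofFinite H
  have := Fintype.ofFinite Ω
  have burnside := sum_card_fixedBy_eq_card_orbits_mul_card_group H Ω
  simp only [← Nat.card_eq_fintype_card, Nat.card_coe_set_eq] at burnside
  have : Nonempty (orbitRel.Quotient H Ω) := .map (Quotient.mk _) ‹_›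
  have hle (g : H) : (fixedBy Ω g).ncard ≤
      (if g = 1 then Nat.card Ω else 0) + (if g ∈ nontrivialFixers H Ω then 2 else 0) := by
    by_cases h1 : g = 1
    · simp [h1, Set.ncard_univ]
    by_cases hne : (fixedBy Ω g).Nonempty
    · simpa [h1, hne, nontrivialFixers] using hfix g h1
    · simp [h1, nontrivialFixers, Set.not_nonempty_iff_eq_empty.1 hne]
  calc Nat.card H ≤ Nat.card (orbitRel.Quotient H Ω) * Nat.card H :=
        Nat.le_mul_of_pos_left _ Nat.card_pos
    _ = ∑ g : H, (fixedBy Ω g).ncard := burnside.symm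
    _ ≤ ∑ g : H, ((if g = 1 then Nat.card Ω else 0) +
          (if g ∈ nontrivialFixers H Ω then 2 else 0)) :=
        Finset.sum_le_sum fun g _ => hle g
    _ = Nat.card Ω + 2 * (nontrivialFixers H Ω).ncard := by
        rw [Finset.sum_add_distrib, Finset.sum_ite_eq', Set.ncard_eq_toFinset_card']
        simp [Finset.sum_ite, mul_comm]

lemma card_le_two_mul_card_stabilizer [Finite H] {K : Subgroup H} {u : H} (hu : u ≠ 1)
    (huK : u ∈ Subgroup.centralizer K) {ω : Ω} (huω : u • ω = ω) :
    Nat.card K ≤ 2 * Nat.card (stabilizer H ω) := by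
  have horbit : orbit K ω ⊆ fixedBy Ω u := by
    rintro _ ⟨k, rfl⟩
    change u • (k : H) • ω = (k : H) • ω
    rw [smul_smul, ← Subgroup.mem_centralizer_iff.1 huK k k.2, mul_smul, huω]
  have hstab : Nat.card (stabilizer K ω) ≤ Nat.card (stabilizer H ω) :=
    Nat.card_le_card_of_injective (fun k => ⟨k.1, k.2⟩) fun a b h => by
      ext
      exact congrArg (fun x : stabilizer H ω => (x : H)) h
  calc Nat.card K = (orbit K ω).ncard * Nat.card (stabilizer K ω) := by
        rw [← index_stabilizer, mul_comm, Subgroup.card_mul_index]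
    _ ≤ 2 * Nat.card (stabilizer H ω) :=
        Nat.mul_le_mul ((Set.ncard_le_ncard horbit).trans (hfix u hu)) hstab

end Stabilizers

section AlternatingQuotient

open alternatingGroup

variable {H Ω : Type*} [Group H] [Finite H] [MulAction H Ω]
  {ρ : H →* alternatingGroup (Fin 4)} (hρ : Function.Surjective ρ)
  (hΩ : Nat.card Ω = 6 * Nat.card ρ.ker)
include hρ hΩ

lemma card_stabilizer_eq_two [IsPretransitive H Ω] (ω : Ω) : Nat.card (stabilizer H ω) = 2 := by
  have h := card_mul_card_stabilizer (H := H) ω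
  rw [card_eq_card_mul_card_ker_of_surjective hρ, card_of_card_eq_four (by simp), hΩ] at h
  have : 0 < Nat.card ρ.ker := Nat.card_pos
  nlinarith

variable [IsPretransitive H Ω] [Finite Ω] (hfix : ∀ g : H, g ≠ 1 → (fixedBy Ω g).ncard ≤ 2)
  (hsemi : IsSemiregular H Ω ρ.ker)
include hfix hsemi

lemma nontrivialFixers_eq_comap_kleinFour_diff_ker :
    nontrivialFixers H Ω = ((kleinFour (Fin 4)).comap ρ : Set H) \ ρ.ker := by
  have hsub := nontrivialFixers_subset (V := kleinFour (Fin 4)) hsemi fun g ω hg => by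
    have h2 : g ^ 2 = 1 := card_stabilizer_eq_two hρ hΩ ω ▸ pow_card_stabilizer_eq_one hg
    refine mem_kleinFour_of_pow_four_eq_one ?_
    rw [← map_pow, show g ^ 4 = (g ^ 2) ^ 2 by group, h2, one_pow, map_one]
  have hn : 0 < Nat.card ρ.ker := Nat.card_pos
  have : Nonempty Ω := (Nat.card_pos_iff.1 (by omega)).1
  have hH := card_eq_card_mul_card_ker_of_surjective hρ
  have hM := card_comap_mul_index_of_surjective hρ (kleinFour (Fin 4))
  have hF := card_le_card_add_two_mul_ncard_nontrivialFixers hfix (H := H)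
  rw [card_of_card_eq_four (by simp)] at hH
  rw [index_kleinFour_fin_four] at hM
  refine Set.eq_of_subset_of_ncard_le hsub ?_
  rw [ncard_comap_diff_ker]
  omega

lemma mul_self_eq_one_of_mem_comap_kleinFour {m : H} (hm : m ∈ (kleinFour (Fin 4)).comap ρ) :
    m * m = 1 := by
  have hout : ∀ u ∈ (kleinFour (Fin 4)).comap ρ, u ∉ ρ.ker → u * u = 1 := by
    intro u hu hu'
    have : u ∈ nontrivialFixers H Ω := by
      rw [nontrivialFixers_eq_comap_kleinFour_diff_ker hρ hΩ hfix hsemi]; exact ⟨hu, hu'⟩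
    obtain ⟨-, ω, hω⟩ := this
    rw [← sq, ← card_stabilizer_eq_two hρ hΩ ω]
    exact pow_card_stabilizer_eq_one hω
  have hconj : ∀ u ∈ (kleinFour (Fin 4)).comap ρ, u ∉ ρ.ker → ∀ x ∈ ρ.ker,
      u * x * u⁻¹ = x⁻¹ := by
    intro u hu hu' x hx
    refine conj_eq_inv_of_mul_self_eq_one (hout u hu hu') (hout _ ?_ ?_)
    · exact mul_mem (ρ.ker_le_comap _ hx) hu
    · exact fun hxu => hu' ((Subgroup.mul_mem_cancel_left _ hx).1 hxu)
  by_cases hmK : m ∈ ρ.ker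
  · obtain ⟨a, b, ha, hb, hab⟩ := exists_ne_one_ne_one_mul_ne_one (G := kleinFour (Fin 4))
      (by rw [kleinFour_card_of_card_eq_four (by simp)]; omega)
    have hlift : ∀ c : kleinFour (Fin 4), c ≠ 1 → ∃ y ∈ (kleinFour (Fin 4)).comap ρ,
        y ∉ ρ.ker ∧ ρ y = c := by
      intro c hc
      obtain ⟨y, hy⟩ := hρ c
      exact ⟨y, by simp [hy], fun hyK => hc (Subtype.ext (hy.symm.trans hyK)), hy⟩
    obtain ⟨g, hgM, hgK, hg⟩ := hlift a ha
    obtain ⟨h, hhM, hhK, hh⟩ := hlift b hb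
    have hghK : g * h ∉ ρ.ker := fun hK =>
      hab (Subtype.ext (by rw [Subgroup.coe_mul, ← hg, ← hh, ← map_mul]; exact hK))
    exact mul_eq_one_iff_eq_inv.2 (inv_eq_self_of_conj_eq_inv (hconj g hgM hgK m hmK)
      (hconj h hhM hhK m hmK) (hconj _ (mul_mem hgM hhM) hghK m hmK)).symm
  · exact hout m hm hmK

end AlternatingQuotient

theorem not_surjective_onto_alternatingGroup {H Ω : Type*} [Group H] [Finite H] [MulAction H Ω]
    [Finite Ω] [IsPretransitive H Ω] (hfix : ∀ g : H, g ≠ 1 → (fixedBy Ω g).ncard ≤ 2)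
    (ρ : H →* alternatingGroup (Fin 4)) (hsemi : IsSemiregular H Ω ρ.ker)
    (hK : 1 < Nat.card ρ.ker) (hΩ : Nat.card Ω = 6 * Nat.card ρ.ker) :
    ¬ Function.Surjective ρ := by
  intro hρ
  set M := (alternatingGroup.kleinFour (Fin 4)).comap ρ
  obtain ⟨ω⟩ : Nonempty Ω := (Nat.card_pos_iff.1 (by omega)).1
  have : Nontrivial (stabilizer H ω) :=
    Finite.one_lt_card_iff_nontrivial.1 (by rw [card_stabilizer_eq_two hρ hΩ ω]; omega)
  obtain ⟨⟨u, huω⟩, hu⟩ := exists_ne (1 : stabilizer H ω)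
  have hu1 : u ≠ 1 := fun h => hu (Subtype.ext h)
  have huM : u ∈ M := by
    have : u ∈ nontrivialFixers H Ω := ⟨hu1, ω, huω⟩
    rw [nontrivialFixers_eq_comap_kleinFour_diff_ker hρ hΩ hfix hsemi] at this
    exact this.1
  have hsq : ∀ m ∈ M, m * m = 1 := fun _ hm =>
    mul_self_eq_one_of_mem_comap_kleinFour hρ hΩ hfix hsemi hm
  have hcentral : u ∈ Subgroup.centralizer M := fun k hk =>
    mul_comm_of_mul_self_eq_one (hsq k hk) (hsq u huM) (hsq _ (mul_mem hk huM))
  have hle := card_le_two_mul_card_stabilizer hfix hu1 hcentral huω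
  have hM : Nat.card M * _ = _ :=
    card_comap_mul_index_of_surjective hρ (alternatingGroup.kleinFour (Fin 4))
  rw [card_stabilizer_eq_two hρ hΩ ω] at hle
  rw [index_kleinFour_fin_four, card_eq_card_mul_card_ker_of_surjective hρ,
    alternatingGroup.card_of_card_eq_four (by simp)] at hM
  omega

section SymmetricQuotient

variable {H Ω : Type*} [Group H] [MulAction H Ω] [IsPretransitive H Ω] {ρ : H →* Perm (Fin 4)}

lemma isPretransitive_comap_alternatingGroup {g : H} {ω : Ω} (hg : g • ω = ω)
    (hodd : ρ g ∉ alternatingGroup (Fin 4)) :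
    IsPretransitive ((alternatingGroup (Fin 4)).comap ρ) Ω := by
  refine IsPretransitive.of_orbit (x₀ := ω) fun y => ?_
  obtain ⟨h, rfl⟩ := exists_smul_eq H ω y
  by_cases hh : ρ h ∈ alternatingGroup (Fin 4)
  · exact ⟨⟨h, hh⟩, rfl⟩
  · refine ⟨⟨h * g, ?_⟩, by simp [Subgroup.smul_def, mul_smul, hg]⟩
    rw [Subgroup.mem_comap, map_mul,
      Subgroup.mul_mem_iff_of_index_two alternatingGroup.index_eq_two]
    exact iff_of_false hh hodd

lemma exists_fixer_not_mem_alternatingGroup [Finite H] [Finite Ω]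
    (hfix : ∀ g : H, g ≠ 1 → (fixedBy Ω g).ncard ≤ 2) (hρ : Function.Surjective ρ)
    (hsemi : IsSemiregular H Ω ρ.ker) (hΩ : Nat.card Ω = 6 * Nat.card ρ.ker) :
    ∃ (g : H) (ω : Ω), g • ω = ω ∧ ρ g ∉ alternatingGroup (Fin 4) := by
  by_contra! hA
  set V := (alternatingGroup.kleinFour (Fin 4)).map (alternatingGroup (Fin 4)).subtype
  have hn : 0 < Nat.card ρ.ker := Nat.card_pos
  have hH : Nat.card H = 24 * Nat.card ρ.ker := by
    rw [card_eq_card_mul_card_ker_of_surjective hρ, Nat.card_perm, Nat.card_fin]; rfl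
  have hstab (ω : Ω) : Nat.card (stabilizer H ω) = 4 := by
    have h := card_mul_card_stabilizer (H := H) ω
    rw [hH, hΩ] at h
    nlinarith
  have hsub := nontrivialFixers_subset (V := V) hsemi fun g ω hg => by
    have h4 : g ^ 4 = 1 := hstab ω ▸ pow_card_stabilizer_eq_one hg
    refine ⟨⟨ρ g, hA g ω hg⟩, mem_kleinFour_of_pow_four_eq_one (Subtype.ext ?_), rfl⟩
    simp [← map_pow, h4]
  have hV : V.index = 6 := by
    have h := V.card_mul_index
    rw [Subgroup.card_map_of_injective Subtype.val_injective,
      alternatingGroup.kleinFour_card_of_card_eq_four (by simp), Nat.card_perm, Nat.card_fin] at h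
    change 4 * V.index = 24 at h
    omega
  have : Nonempty Ω := (Nat.card_pos_iff.1 (by omega)).1
  have hM : Nat.card (V.comap ρ) * 6 = _ := hV ▸ card_comap_mul_index_of_surjective hρ V
  have hF := card_le_card_add_two_mul_ncard_nontrivialFixers hfix (H := H)
  have hle := Set.ncard_le_ncard hsub
  rw [ncard_comap_diff_ker] at hle
  omega

end SymmetricQuotient

theorem not_surjective_onto_perm {H Ω : Type*} [Group H] [Finite H] [MulAction H Ω]
    [Finite Ω] [IsPretransitive H Ω] (hfix : ∀ g : H, g ≠ 1 → (fixedBy Ω g).ncard ≤ 2)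
    (ρ : H →* Perm (Fin 4)) (hsemi : IsSemiregular H Ω ρ.ker)
    (hK : 1 < Nat.card ρ.ker) (hΩ : Nat.card Ω = 6 * Nat.card ρ.ker) :
    ¬ Function.Surjective ρ := by
  intro hρ
  obtain ⟨g, ω, hg, hodd⟩ := exists_fixer_not_mem_alternatingGroup hfix hρ hsemi hΩ
  have := isPretransitive_comap_alternatingGroup hg hodd
  set R := (alternatingGroup (Fin 4)).comap ρ
  have hfixR (r : R) (hr : r ≠ 1) : (fixedBy Ω r).ncard ≤ 2 := hfix r fun h => hr (Subtype.ext h)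
  have hsemiR : IsSemiregular R Ω (ρ.subgroupComap (alternatingGroup (Fin 4))).ker :=
    fun x hx hx1 ω =>
      hsemi x ((mem_ker_subgroupComap _ _).1 hx) (fun h => hx1 (Subtype.ext h)) ω
  refine not_surjective_onto_alternatingGroup hfixR _ hsemiR ?_ ?_
    (ρ.subgroupComap_surjective_of_surjective _ hρ)
  all_goals rwa [card_ker_subgroupComap]

theorem stmt_6_general (G Ω : Type*) [Group G] [Finite G] [MulAction G Ω] [Finite Ω]
    [IsPretransitive G Ω] (hfix : HasFixity G Ω 2)
    (N : Subgroup G) (hmin : IsMinimalNormal G N)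
    (hsemi : IsSemiregular G Ω N)
    (horb : {s : Set Ω | IsOrbitOf G Ω N s}.ncard = 6) :
    haveI := hmin.1
    ¬ Nonempty ((G ⧸ N) ≃* Equiv.Perm (Fin 4)) ∧
      ¬ Nonempty ((G ⧸ N) ≃* alternatingGroup (Fin 4)) := by
  have := hmin.1
  have hK : 1 < Nat.card N := (Subgroup.one_lt_card_iff_ne_bot N).2 hmin.2.1
  have hΩ : Nat.card Ω = 6 * Nat.card N := by
    rw [hsemi.card_eq, ← ncard_setOf_isOrbitOf, horb]
  constructor
  · rintro ⟨φ⟩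
    have hker := ker_comp_mk'_of_mulEquiv φ
    exact not_surjective_onto_perm hfix.1 _ (by rwa [hker]) (by rwa [hker]) (by rwa [hker])
      (φ.surjective.comp (QuotientGroup.mk'_surjective N))
  · rintro ⟨φ⟩
    have hker := ker_comp_mk'_of_mulEquiv φ
    exact not_surjective_onto_alternatingGroup hfix.1 _ (by rwa [hker]) (by rwa [hker])
      (by rwa [hker]) (φ.surjective.comp (QuotientGroup.mk'_surjective N))

theorem stmt_6 (G Ω : Type*) [Group G] [Finite G] [MulAction G Ω] [Finite Ω]
    [FaithfulSMul G Ω] [IsPretransitive G Ω] (hfix : HasFixity G Ω 2)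
    (N : Subgroup G) (hmin : IsMinimalNormal G N) (hab : ∀ x ∈ N, ∀ y ∈ N, x * y = y * x)
    (hsemi : IsSemiregular G Ω N)
    (horb : {s : Set Ω | IsOrbitOf G Ω N s}.ncard = 6) :
    haveI := hmin.1
    ¬ Nonempty ((G ⧸ N) ≃* Equiv.Perm (Fin 4)) ∧
      ¬ Nonempty ((G ⧸ N) ≃* alternatingGroup (Fin 4)) :=
  stmt_6_general G Ω hfix N hmin hsemi horb
end

section
/- Let G be a finite group acting transitively and faithfully with fixity 3 on a finite set Ω, and let N be a minimal normal subgroup of prime power order acting semi-regularly on Ω. Then the induced action of G/N on the set Ω̄ of N-orbits has fixity at most 3: no nontrivial element of G/N fixes four or more N-orbits. -/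
open MulAction Pointwise

private lemma aux_count_stmt9 {α β : Type*} [Finite α] [Finite β] (f : α → β) (k : ℕ)
    (h : ∀ b, Nat.card {a // f a = b} ≤ k) : Nat.card α ≤ k * Nat.card β := by
  classical
  have _ : Fintype α := Fintype.ofFinite α
  have _ : Fintype β := Fintype.ofFinite β
  rw [Nat.card_eq_fintype_card, Nat.card_eq_fintype_card]
  calc Fintype.card α = Fintype.card (Σ b, {a // f a = b}) :=
        (Fintype.card_congr (Equiv.sigmaFiberEquiv f)).symm
    _ = ∑ b, Fintype.card {a // f a = b} := Fintype.card_sigma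
    _ ≤ ∑ _b : β, k := Finset.sum_le_sum fun b _ => by
        simpa [Nat.card_eq_fintype_card] using h b
    _ = Fintype.card β * k := by simp [Finset.sum_const, mul_comm]
    _ = k * Fintype.card β := mul_comm _ _

theorem stmt_9 (G Ω : Type*) [Group G] [Finite G] [MulAction G Ω] [Finite Ω]
    [FaithfulSMul G Ω] [IsPretransitive G Ω] (hfix : HasFixity G Ω 3)
    (N : Subgroup G) (hmin : IsMinimalNormal G N)
    (p : ℕ) (n : ℕ) (hp : p.Prime) (hcard : Nat.card N = p ^ n)
    (hsemi : IsSemiregular G Ω N) :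
    ∀ g : G, g ∉ N → {s : Set Ω | IsOrbitOf G Ω N s ∧ g • s = s}.ncard ≤ 3 := by
  classical
  intro g hg
  set S : Set (Set Ω) := {s | IsOrbitOf G Ω N s ∧ g • s = s} with hSdef
  have hpt : ∀ s : S, ∃ ω : Ω, (s : Set Ω) = orbit N ω := fun s => s.2.1
  choose pt hpt using hpt
  -- for each orbit s fixed by g and each m ∈ N, there is k ∈ N with k • x = g • x
  -- where x = m • pt s
  have key : ∀ (s : S) (m : N), ∃ k : N, (k : G) • ((m : G) • pt s) = g • ((m : G) • pt s) := by
    intro s m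
    have hx : (m : G) • pt s ∈ (s : Set Ω) := by
      rw [hpt s]; exact mem_orbit (pt s) m
    have hgx : g • ((m : G) • pt s) ∈ (s : Set Ω) := by
      have h2 := Set.smul_mem_smul_set (a := g) hx
      rwa [s.2.2] at h2
    have horb : (s : Set Ω) = orbit N ((m : G) • pt s) := by
      rw [hpt s]
      exact (orbit_eq_iff.mpr (mem_orbit (pt s) m)).symm
    rw [horb] at hgx
    obtain ⟨k, hk⟩ := hgx
    exact ⟨k, hk⟩
  choose F hF using key
  set f : S × N → N := fun a => F a.1 a.2 with hfdef
  -- fibers of f have size at most 3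
  have hfiber : ∀ k0 : N, Nat.card {a : S × N // f a = k0} ≤ 3 := by
    intro k0
    set h : G := (k0 : G)⁻¹ * g with hh
    have hne : h ≠ 1 := by
      intro h1
      exact hg ((inv_mul_eq_one.mp h1) ▸ k0.2)
    have hmem : ∀ a : {a : S × N // f a = k0},
        ((a.1.2 : G) • pt a.1.1) ∈ fixedBy Ω h := by
      intro a
      have hk : (k0 : G) • ((a.1.2 : G) • pt a.1.1) = g • ((a.1.2 : G) • pt a.1.1) := by
        have := hF a.1.1 a.1.2
        rwa [show F a.1.1 a.1.2 = k0 from a.2] at this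
      show h • ((a.1.2 : G) • pt a.1.1) = (a.1.2 : G) • pt a.1.1
      rw [hh, mul_smul, ← hk, inv_smul_smul]
    have inj : Function.Injective
        (fun a : {a : S × N // f a = k0} =>
          (⟨(a.1.2 : G) • pt a.1.1, hmem a⟩ : fixedBy Ω h)) := by
      intro a b hab
      have hxy : (a.1.2 : G) • pt a.1.1 = (b.1.2 : G) • pt b.1.1 :=
        congrArg Subtype.val hab
      -- the two orbits share a point, hence coincide
      have horb : ∀ c : {a : S × N // f a = k0},
          (c.1.1 : Set Ω) = orbit N ((c.1.2 : G) • pt c.1.1) := by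
        intro c
        rw [hpt c.1.1]
        exact (orbit_eq_iff.mpr (mem_orbit (pt c.1.1) c.1.2)).symm
      have hs : a.1.1 = b.1.1 := by
        apply Subtype.ext
        rw [horb a, horb b, hxy]
      -- then the N-parts coincide by semiregularity
      have hmn : a.1.2 = b.1.2 := by
        have hxy' : (a.1.2 : G) • pt a.1.1 = (b.1.2 : G) • pt a.1.1 := by
          rw [hxy, hs]
        have hfix' : ((b.1.2 : G)⁻¹ * (a.1.2 : G)) • pt a.1.1 = pt a.1.1 := by
          rw [mul_smul, hxy', inv_smul_smul]
        have hmemN : (b.1.2 : G)⁻¹ * (a.1.2 : G) ∈ N :=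
          mul_mem (inv_mem b.1.2.2) a.1.2.2
        by_contra hne'
        have hne'' : (b.1.2 : G)⁻¹ * (a.1.2 : G) ≠ 1 := by
          intro h1
          exact hne' (Subtype.ext (inv_mul_eq_one.mp h1).symm)
        exact hsemi _ hmemN hne'' (pt a.1.1) hfix'
      apply Subtype.ext
      exact Prod.ext hs hmn
    calc Nat.card {a : S × N // f a = k0}
        ≤ Nat.card (fixedBy Ω h) := Nat.card_le_card_of_injective _ inj
      _ = (fixedBy Ω h).ncard := Nat.card_coe_set_eq _
      _ ≤ 3 := hfix.1 h hne
  have hcount := aux_count_stmt9 f 3 hfiber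
  rw [Nat.card_prod, Nat.card_coe_set_eq] at hcount
  have hNpos : 0 < Nat.card N := Nat.card_pos
  exact Nat.le_of_mul_le_mul_right hcount hNpos
end

section
/- Let G be a finite group acting transitively and faithfully with fixity 3 on a finite set Ω, and let N be a minimal normal subgroup of prime power order p^n acting semi-regularly. Suppose g ∈ G is nontrivial and fixes exactly three points, all lying in a single N-orbit ᾱ, and suppose g stabilizes some N-orbit other than ᾱ. Then |N| ∈ {3, 9}. -/
open MulAction Pointwise

/-!
Nontrivial powers of `g` fix exactly the three fixed points of `g`, so `⟨g⟩` acts freely on the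
second `g`-stable orbit `s`; hence `|g|` divides `|s| = p^n` and some power `g₁` of `g` has order
`p`. The minimal normal `p`-subgroup `N` is elementary abelian, so `ψ x = ⁅g₁, x⁆` is an
endomorphism of `N`, and for a fixed point `β` the map `x ↦ x • β` identifies `ker ψ = C_N(g₁)`
with the three fixed points; thus `p = 3`. Writing `g₁ • ω = m • ω` for some `ω ∈ s`, the relation
`g₁³ = 1` gives `ψ² m = 1`, while `m ∈ im ψ` would produce a fixed point in `s`. As `ψ³ = 0`,
this makes `im ψ` a proper subgroup of `ker ψ²`, so `|N| / 3 = |im ψ| < |ker ψ²| ≤ 9`.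
-/

open scoped IsMulCommutative

theorem card_dvd_ncard_of_le_stabilizer {G X : Type*} [Group G] [MulAction G X]
    {H : Subgroup G} {s : Set X} (hHs : H ≤ stabilizer G s)
    (hfree : ∀ h ∈ H, ∀ x ∈ s, h • x = x → h = 1) : Nat.card H ∣ s.ncard := by
  let S : SubMulAction H X :=
    { carrier := s
      smul_mem' := fun h x hx => by
        rw [← mem_stabilizer_iff.1 (hHs h.2)]
        exact Set.smul_mem_smul_set hx }
  have hS : ∀ x : S, stabilizer H x = ⊥ := fun x =>
    (Subgroup.eq_bot_iff_forall _).2 fun h hh =>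
      Subtype.ext (hfree h h.2 x x.2 (congrArg Subtype.val hh))
  rw [← Nat.card_coe_set_eq, show Nat.card s = Nat.card S from rfl,
    Nat.card_congr (MulAction.selfEquivOrbitsQuotientProd hS), Nat.card_prod]
  exact dvd_mul_left _ _

theorem exists_mem_zpowers_orderOf_eq_prime {G : Type*} [Group G] {g : G} {p n : ℕ}
    (hp : p.Prime) (hg : g ≠ 1) (hdvd : orderOf g ∣ p ^ n) :
    ∃ g₁ ∈ Subgroup.zpowers g, orderOf g₁ = p := by
  have := Fact.mk hp
  obtain ⟨j, -, hj⟩ := (Nat.dvd_prime_pow hp).1 hdvd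
  have hj0 : j ≠ 0 := by
    rintro rfl
    exact hg (orderOf_eq_one_iff.1 (by rwa [pow_zero] at hj))
  have : Finite (Subgroup.zpowers g) :=
    Nat.finite_of_card_ne_zero (by rw [Nat.card_zpowers, hj]; exact (pow_pos hp.pos j).ne')
  obtain ⟨x, hx⟩ := exists_prime_orderOf_dvd_card' (G := Subgroup.zpowers g) p
    (by rw [Nat.card_zpowers, hj]; exact dvd_pow_self p hj0)
  exact ⟨x, x.2, by rwa [Subgroup.orderOf_coe]⟩

theorem HasFixity.fixedBy_eq_of_mem_zpowers {G Ω : Type*} [Group G] [MulAction G Ω] [Finite Ω]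
    {k : ℕ} (hfix : HasFixity G Ω k) {g h : G} (hg : (fixedBy Ω g).ncard = k)
    (hh : h ∈ Subgroup.zpowers g) (h1 : h ≠ 1) : fixedBy Ω h = fixedBy Ω g := by
  refine (Set.eq_of_subset_of_ncard_le (s := fixedBy Ω g) ?_ ?_ (Set.toFinite _)).symm
  · exact fun ω hω => (Subgroup.zpowers_le (H := stabilizer G ω)).2 hω hh
  · rw [hg]
    exact hfix.1 h h1

theorem HasFixity.orderOf_dvd_ncard {G Ω : Type*} [Group G] [MulAction G Ω] [Finite Ω] {k : ℕ}
    (hfix : HasFixity G Ω k) {g : G} (hg : (fixedBy Ω g).ncard = k) {s : Set Ω} (hgs : g • s = s)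
    (hdisj : Disjoint s (fixedBy Ω g)) : orderOf g ∣ s.ncard := by
  rw [← Nat.card_zpowers]
  refine card_dvd_ncard_of_le_stabilizer (Subgroup.zpowers_le.2 hgs) fun h hh x hx hfx => ?_
  by_contra h1
  rw [← mem_fixedBy, hfix.fixedBy_eq_of_mem_zpowers hg hh h1] at hfx
  exact Set.disjoint_left.1 hdisj hx hfx

namespace IsMinimalNormal

variable {G : Type*} [Group G] {N : Subgroup G}

theorem eq_top_of_characteristic (hmin : IsMinimalNormal G N) {K : Subgroup N}
    [K.Characteristic] (hK : K ≠ ⊥) : K = ⊤ := by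
  have := hmin.1
  refine Subgroup.map_injective N.subtype_injective ?_
  rw [← MonoidHom.range_eq_map, N.range_subtype]
  refine (hmin.2.2 _ inferInstance (Subgroup.map_subtype_le K)).resolve_left ?_
  rw [← Subgroup.map_bot N.subtype]
  exact (Subgroup.map_injective N.subtype_injective).ne hK

theorem isMulCommutative {p : ℕ} [Fact p.Prime] [Finite N] (hmin : IsMinimalNormal G N)
    (hN : IsPGroup p N) : IsMulCommutative N := by
  have : Nontrivial N := (Subgroup.nontrivial_iff_ne_bot N).2 hmin.2.1
  have hZ := hmin.eq_top_of_characteristic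
    ((Subgroup.nontrivial_iff_ne_bot (Subgroup.center N)).1 hN.center_nontrivial)
  exact ⟨⟨fun a b => Subgroup.mem_center_iff.1 (hZ ▸ Subgroup.mem_top b) a⟩⟩

theorem pow_eq_one {p : ℕ} [Fact p.Prime] [Finite N] [IsMulCommutative N]
    (hmin : IsMinimalNormal G N) (hN : IsPGroup p N) (x : N) : x ^ p = 1 := by
  have : Nontrivial N := (Subgroup.nontrivial_iff_ne_bot N).2 hmin.2.1
  obtain ⟨k, hk, hcard⟩ := hN.nontrivial_iff_card.1 this
  let K := (powMonoidHom p : N →* N).ker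
  have : K.Characteristic := Subgroup.characteristic_iff_comap_le.2 fun ϕ y hy => by
    simpa [K, ← map_pow] using hy
  obtain ⟨y, hy⟩ := exists_prime_orderOf_dvd_card' p (hcard ▸ dvd_pow_self p hk.ne')
  have hK : K ≠ ⊥ := fun h => by
    have hyK : y ∈ K := by simp [K, ← hy, pow_orderOf_eq_one]
    rw [h, Subgroup.mem_bot] at hyK
    exact (Fact.out : p.Prime).one_lt.ne' (by rw [← hy, hyK, orderOf_one])
  have hx : x ∈ K := (hmin.eq_top_of_characteristic hK) ▸ Subgroup.mem_top x
  simpa [K] using hx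

end IsMinimalNormal

theorem MonoidHom.card_ker_comp_le {A B C : Type*} [Group A] [Group B] [Group C]
    [Finite A] [Finite B] (f : B →* C) (g : A →* B) :
    Nat.card (f.comp g).ker ≤ Nat.card f.ker * Nat.card g.ker := by
  let ρ := g.domRestrict (f.comp g).ker
  have hrange : ρ.range ≤ f.ker := by
    rintro _ ⟨x, rfl⟩
    exact x.2
  have hker : Nat.card ρ.ker ≤ Nat.card g.ker :=
    Nat.card_le_card_of_injective (fun x => (⟨x.1.1, x.2⟩ : g.ker))
      fun x y hxy => Subtype.ext (Subtype.ext (congrArg (fun z : g.ker => z.1) hxy))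
  calc Nat.card (f.comp g).ker = Nat.card ρ.range * Nat.card ρ.ker := by
        rw [← Subgroup.index_ker, mul_comm, Subgroup.card_mul_index]
    _ ≤ Nat.card f.ker * Nat.card g.ker :=
        Nat.mul_le_mul (Subgroup.card_le_of_le hrange) hker

theorem MonoidHom.card_lt_card_ker_pow_three {A : Type*} [Group A] [Finite A] (ψ : A →* A)
    (h : ψ.range < (ψ.comp ψ).ker) : Nat.card A < Nat.card ψ.ker ^ 3 := by
  have hlt : Nat.card ψ.range < Nat.card (ψ.comp ψ).ker :=
    lt_of_not_ge fun hle => h.ne (Subgroup.eq_of_le_of_card_ge h.le hle)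
  calc Nat.card A = Nat.card ψ.ker * Nat.card ψ.range := by
        rw [← Subgroup.index_ker, Subgroup.card_mul_index]
    _ < Nat.card ψ.ker * (Nat.card ψ.ker * Nat.card ψ.ker) :=
        Nat.mul_lt_mul_of_pos_left (hlt.trans_le (MonoidHom.card_ker_comp_le ψ ψ)) Nat.card_pos
    _ = Nat.card ψ.ker ^ 3 := by ring

section ExponentThree

/- In additive notation over `𝔽₃`: `(φ - 1)² = φ² + φ + 1` and `(φ - 1)³ = φ³ - 1`. -/

variable {A : Type*} [CommGroup A] (φ : A →* A)

theorem div_id_comp_self_apply (hA : ∀ x : A, x ^ 3 = 1) (x : A) :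
    ((φ / .id A).comp (φ / .id A)) x = φ (φ x) * φ x * x := by
  have h : (φ x)⁻¹ * (φ x)⁻¹ = φ x := by
    rw [← mul_inv_rev, inv_eq_iff_mul_eq_one, ← pow_three', hA]
  calc ((φ / .id A).comp (φ / .id A)) x = φ (φ x) * ((φ x)⁻¹ * (φ x)⁻¹) * x := by
        simp only [MonoidHom.comp_apply, MonoidHom.div_apply, MonoidHom.id_apply, map_div]
        simp only [div_eq_mul_inv, mul_inv, inv_inv]
        ac_rfl
    _ = φ (φ x) * φ x * x := by rw [h]

theorem range_div_id_le_ker_comp_self (hA : ∀ x : A, x ^ 3 = 1) (hφ : ∀ x, φ (φ (φ x)) = x) :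
    (φ / .id A).range ≤ ((φ / .id A).comp (φ / .id A)).ker := by
  rintro _ ⟨x, rfl⟩
  rw [MonoidHom.mem_ker, div_id_comp_self_apply φ hA, MonoidHom.div_apply, MonoidHom.id_apply,
    map_div, map_div, hφ, div_mul_div_comm, div_mul_div_comm, div_eq_one]
  ac_rfl

end ExponentThree

section SemiregularNormalSubgroup

variable {G Ω : Type*} [Group G] [MulAction G Ω] {N : Subgroup G}

theorem IsSemiregular.smul_left_injective_s10 (hsemi : IsSemiregular G Ω N) (ω : Ω) :
    Function.Injective fun x : N => x • ω := by
  intro x y hxy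
  rw [← inv_mul_eq_one]
  by_contra hne
  refine hsemi _ (x⁻¹ * y).2 (fun h => hne (Subtype.ext h)) ω ?_
  change (x⁻¹ * y) • ω = ω
  rw [mul_smul, show y • ω = x • ω from hxy.symm, inv_smul_smul]

theorem IsSemiregular.card_orbit (hsemi : IsSemiregular G Ω N) (ω : Ω) :
    Nat.card (orbit N ω) = Nat.card N :=
  (Nat.card_congr (Equiv.ofInjective _ (hsemi.smul_left_injective_s10 ω))).symm

theorem smul_smul_eq_conjNormal_smul [N.Normal] (g : G) (x : N) (ω : Ω) :
    g • x • ω = MulAut.conjNormal g x • g • ω := by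
  rw [Subgroup.smul_def, Subgroup.smul_def, MulAut.conjNormal_apply, smul_smul, smul_smul,
    inv_mul_cancel_right]

variable (N) in
def commutatorHom [N.Normal] [IsMulCommutative N] (g : G) : N →* N :=
  (MulAut.conjNormal g).toMonoidHom / .id N

variable [N.Normal] [IsMulCommutative N]

theorem ncard_fixedBy_eq_card_ker_commutatorHom (hsemi : IsSemiregular G Ω N) {g : G} {α : Ω}
    (hne : (fixedBy Ω g).Nonempty) (hsub : fixedBy Ω g ⊆ orbit N α) :
    (fixedBy Ω g).ncard = Nat.card (commutatorHom N g).ker := by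
  obtain ⟨β, hβ⟩ := hne
  rw [← orbit_eq_iff.2 (hsub hβ)] at hsub
  have hmem : ∀ x : N, x • β ∈ fixedBy Ω g ↔ x ∈ (commutatorHom N g).ker := fun x => by
    rw [mem_fixedBy, smul_smul_eq_conjNormal_smul, hβ, (hsemi.smul_left_injective_s10 β).eq_iff,
      MonoidHom.mem_ker, commutatorHom, MonoidHom.div_apply, div_eq_one]
    rfl
  have himage : fixedBy Ω g = (fun x : N => x • β) '' (commutatorHom N g).ker := by
    ext ω
    constructor
    · intro hω
      obtain ⟨x, rfl⟩ := hsub hω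
      exact ⟨x, (hmem x).1 hω, rfl⟩
    · rintro ⟨x, hx, rfl⟩
      exact (hmem x).2 hx
  rw [himage, Set.ncard_image_of_injective _ (hsemi.smul_left_injective_s10 β)]
  exact (Nat.card_coe_set_eq _).symm

theorem range_commutatorHom_lt_ker_comp_self (hsemi : IsSemiregular G Ω N) {g : G}
    (hg : g ^ 3 = 1) (hN : ∀ x : N, x ^ 3 = 1) {ω : Ω} (hs : g • orbit N ω = orbit N ω)
    (hfree : ∀ x ∈ orbit N ω, g • x ≠ x) :
    (commutatorHom N g).range < ((commutatorHom N g).comp (commutatorHom N g)).ker := by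
  set φ : N →* N := (MulAut.conjNormal g).toMonoidHom
  have hφ : ∀ x, φ (φ (φ x)) = x := fun x => by
    ext
    simp only [φ, MulEquiv.coe_toMonoidHom, MulAut.conjNormal_apply]
    rw [show g * (g * (g * x * g⁻¹) * g⁻¹) * g⁻¹ = g * g * g * x * (g * g * g)⁻¹ by group,
      ← pow_three', hg, one_mul, inv_one, mul_one]
  obtain ⟨m, hm⟩ : ∃ m : N, m • ω = g • ω := by
    rw [← mem_orbit_iff, ← hs]
    exact Set.smul_mem_smul_set (mem_orbit_self ω)
  -- On the orbit `g` is the affine map `y ↦ φ y * m`: `g³ = 1` puts `m` in `ker ψ²`, and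
  -- `m = ψ x` would make `x⁻¹ • ω` a fixed point.
  have hstep : ∀ y : N, g • y • ω = (φ y * m) • ω := fun y => by
    rw [smul_smul_eq_conjNormal_smul, ← hm, mul_smul]
    rfl
  refine SetLike.lt_iff_le_and_exists.2 ⟨range_div_id_le_ker_comp_self φ hN hφ, m, ?_, ?_⟩
  · rw [MonoidHom.mem_ker, commutatorHom, div_id_comp_self_apply φ hN]
    apply hsemi.smul_left_injective_s10 ω
    calc (φ (φ m) * φ m * m) • ω = g • g • g • ω := by rw [← hm, hstep, hstep, map_mul]
      _ = (1 : N) • ω := by rw [smul_smul, smul_smul, ← pow_three', hg, one_smul, one_smul]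
  · rintro ⟨x, hx⟩
    apply hfree _ (mem_orbit ω x⁻¹)
    rw [hstep, ← hx, commutatorHom, MonoidHom.div_apply, MonoidHom.id_apply, map_inv,
      div_eq_mul_inv, inv_mul_cancel_left]

end SemiregularNormalSubgroup

theorem stmt_10_general (G Ω : Type*) [Group G] [MulAction G Ω] [Finite Ω]
    (hfix : HasFixity G Ω 3)
    (N : Subgroup G) (hmin : IsMinimalNormal G N)
    (p : ℕ) (n : ℕ) (hp : p.Prime) (hcard : Nat.card N = p ^ n)
    (hsemi : IsSemiregular G Ω N)
    (g : G) (hg : g ≠ 1) (α : Ω)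
    (h3 : (fixedBy Ω g).ncard = 3) (hsub : fixedBy Ω g ⊆ MulAction.orbit N α)
    (hother : ∃ s : Set Ω, IsOrbitOf G Ω N s ∧ s ≠ MulAction.orbit N α ∧ g • s = s) :
    Nat.card N = 3 ∨ Nat.card N = 9 := by
  have := Fact.mk hp
  have := hmin.1
  have : Finite N := Nat.finite_of_card_ne_zero (hcard ▸ pow_ne_zero n hp.ne_zero)
  obtain ⟨_, ⟨ω, rfl⟩, hωα, hgω⟩ := hother
  have hdisj : Disjoint (orbit N ω) (fixedBy Ω g) := Set.disjoint_left.2 fun x hx hfx =>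
    hωα ((orbit_eq_iff.2 hx).symm.trans (orbit_eq_iff.2 (hsub hfx)))
  obtain ⟨g₁, hg₁, hord⟩ := exists_mem_zpowers_orderOf_eq_prime hp hg
    (hcard ▸ hsemi.card_orbit ω ▸ Nat.card_coe_set_eq _ ▸ hfix.orderOf_dvd_ncard h3 hgω hdisj)
  have hg₁1 : g₁ ≠ 1 := fun h => hp.ne_one (hord ▸ orderOf_eq_one_iff.2 h)
  have hfix₁ := hfix.fixedBy_eq_of_mem_zpowers h3 hg₁ hg₁1
  have := hmin.isMulCommutative (IsPGroup.of_card hcard)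
  have hker : Nat.card (commutatorHom N g₁).ker = 3 := by
    rw [← ncard_fixedBy_eq_card_ker_commutatorHom hsemi
      (hfix₁ ▸ Set.nonempty_of_ncard_ne_zero (by simp [h3])) (hfix₁ ▸ hsub), hfix₁, h3]
  have hdvd : 3 ∣ p ^ n := hker ▸ hcard ▸ Subgroup.card_subgroup_dvd_card _
  obtain rfl : p = 3 :=
    ((Nat.prime_dvd_prime_iff_eq Nat.prime_three hp).1 (Nat.prime_three.dvd_of_dvd_pow hdvd)).symm
  have hlt := MonoidHom.card_lt_card_ker_pow_three _ (range_commutatorHom_lt_ker_comp_self hsemi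
    (hord ▸ pow_orderOf_eq_one g₁) (hmin.pow_eq_one (IsPGroup.of_card hcard))
    (Subgroup.zpowers_le (H := stabilizer G (orbit N ω)) |>.2 hgω hg₁)
    fun x hx hfx => Set.disjoint_left.1 hdisj hx (hfix₁ ▸ hfx))
  rw [hker, hcard] at hlt
  have hn3 : n < 3 := (Nat.pow_lt_pow_iff_right (by norm_num)).1 hlt
  have hn0 : 0 < n := Nat.pos_of_ne_zero (by rintro rfl; norm_num at hdvd)
  rw [hcard]
  interval_cases n <;> norm_num

theorem stmt_10 (G Ω : Type*) [Group G] [Finite G] [MulAction G Ω] [Finite Ω]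
    [FaithfulSMul G Ω] [IsPretransitive G Ω] (hfix : HasFixity G Ω 3)
    (N : Subgroup G) (hmin : IsMinimalNormal G N)
    (p : ℕ) (n : ℕ) (hp : p.Prime) (hcard : Nat.card N = p ^ n)
    (hsemi : IsSemiregular G Ω N)
    (g : G) (hg : g ≠ 1) (α : Ω)
    (h3 : (fixedBy Ω g).ncard = 3) (hsub : fixedBy Ω g ⊆ MulAction.orbit N α)
    (hother : ∃ s : Set Ω, IsOrbitOf G Ω N s ∧ s ≠ MulAction.orbit N α ∧ g • s = s) :
    Nat.card N = 3 ∨ Nat.card N = 9 :=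
  stmt_10_general G Ω hfix N hmin p n hp hcard hsemi g hg α h3 hsub hother
end

section
/- Let G be a finite group acting transitively and faithfully with fixity 3 on a finite set Ω, and let N be a minimal normal subgroup of prime power order acting semi-regularly. Suppose g ∈ G is nontrivial and fixes exactly three points α, β, γ ∈ Ω. Then either β and γ both lie in the N-orbit of α, or the three N-orbits of α, β, γ are pairwise distinct. -/
open MulAction Pointwise

-- membership in the orbit of a subgroup, unfolded to elements of G
lemma mem_orb_iff {G Ω : Type*} [Group G] [MulAction G Ω] (N : Subgroup G) (x y : Ω) :
    y ∈ MulAction.orbit N x ↔ ∃ m ∈ N, m • x = y := by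
  constructor
  · rintro ⟨⟨m, hm⟩, rfl⟩; exact ⟨m, hm, rfl⟩
  · rintro ⟨m, hm, rfl⟩; exact ⟨⟨m, hm⟩, rfl⟩

-- if g fixes α and fixes n•α (n ∈ N, N normal, semiregular), then g commutes with n
lemma key_comm {G Ω : Type*} [Group G] [MulAction G Ω] {N : Subgroup G}
    (hN : N.Normal) (hsemi : IsSemiregular G Ω N)
    {g : G} {α : Ω} (hα : g • α = α)
    {n : G} (hn : n ∈ N) (hfix : g • (n • α) = n • α) : g * n = n * g := by
  have hm : (n⁻¹ * (g * n * g⁻¹)) ∈ N := N.mul_mem (N.inv_mem hn) (hN.conj_mem n hn g)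
  have hfixm : (n⁻¹ * (g * n * g⁻¹)) • α = α := by
    have hα' : g⁻¹ • α = α := by
      conv_lhs => rw [← hα]
      simp
    rw [mul_smul, mul_smul, mul_smul, hα', hfix]
    simp
  have h1 : n⁻¹ * (g * n * g⁻¹) = 1 := by
    by_contra h
    exact hsemi _ hm h α hfixm
  have h2 : g * n * g⁻¹ = n := by
    have := congrArg (n * ·) h1
    simpa [mul_assoc] using this
  calc g * n = (g * n * g⁻¹) * g := by group
    _ = n * g := by rw [h2]

-- if g fixes α, γ and fixes n•α, then g fixes n•γ
lemma key_fix {G Ω : Type*} [Group G] [MulAction G Ω] {N : Subgroup G}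
    (hN : N.Normal) (hsemi : IsSemiregular G Ω N)
    {g : G} {α γ : Ω} (hα : g • α = α) (hγ : g • γ = γ)
    {n : G} (hn : n ∈ N) (hfix : g • (n • α) = n • α) : g • (n • γ) = n • γ := by
  have hc := key_comm hN hsemi hα hn hfix
  rw [← mul_smul, hc, mul_smul, hγ]

-- the combinatorial core: m • z can be none of x, y, z
lemma helper {G Ω : Type*} [Group G] [MulAction G Ω] {N : Subgroup G}
    (hsemi : IsSemiregular G Ω N) {m : G} (hm : m ∈ N) {x y z : Ω}
    (hmx : m • x = y) (hxy : x ≠ y) (hz : z ∉ MulAction.orbit N x)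
    (hmz : m • z = x ∨ m • z = y ∨ m • z = z) : False := by
  rcases hmz with h | h | h
  · -- z = m⁻¹ • x ∈ orbit N x
    apply hz
    rw [mem_orb_iff]
    exact ⟨m⁻¹, N.inv_mem hm, by rw [← h]; simp⟩
  · -- m • z = m • x forces z = x ∈ orbit N x
    have : z = x := by
      have := h.trans hmx.symm
      exact smul_left_cancel m this
    apply hz
    rw [this, mem_orb_iff]
    exact ⟨1, N.one_mem, one_smul _ _⟩
  · have hm1 : m = 1 := by
      by_contra h1
      exact hsemi m hm h1 z h
    exact hxy (by rw [← hmx, hm1, one_smul])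

theorem stmt_11 (G Ω : Type*) [Group G] [Finite G] [MulAction G Ω] [Finite Ω]
    [FaithfulSMul G Ω] [IsPretransitive G Ω] (hfix : HasFixity G Ω 3)
    (N : Subgroup G) (hmin : IsMinimalNormal G N)
    (p : ℕ) (n : ℕ) (hp : p.Prime) (hcard : Nat.card N = p ^ n)
    (hsemi : IsSemiregular G Ω N)
    (g : G) (hg : g ≠ 1) (α β γ : Ω) (hαβ : α ≠ β) (hαγ : α ≠ γ) (hβγ : β ≠ γ)
    (hfixpts : fixedBy Ω g = {α, β, γ}) :
    (β ∈ MulAction.orbit N α ∧ γ ∈ MulAction.orbit N α) ∨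
    (MulAction.orbit N α ≠ MulAction.orbit N β ∧ MulAction.orbit N α ≠ MulAction.orbit N γ ∧
      MulAction.orbit N β ≠ MulAction.orbit N γ) := by
  obtain ⟨hN, -, -⟩ := hmin
  have hgα : g • α = α := by
    have h : α ∈ fixedBy Ω g := by rw [hfixpts]; left; rfl
    exact h
  have hgβ : g • β = β := by
    have h : β ∈ fixedBy Ω g := by rw [hfixpts]; right; left; rfl
    exact h
  have hgγ : g • γ = γ := by
    have h : γ ∈ fixedBy Ω g := by rw [hfixpts]; right; right; rfl
    exact h
  -- orbit equality gives a witness m • a = b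
  have orb_wit : ∀ a b : Ω, MulAction.orbit N a = MulAction.orbit N b → ∃ m ∈ N, m • a = b := by
    intro a b heq
    have hb : b ∈ MulAction.orbit N a := heq ▸ MulAction.mem_orbit_self b
    exact (mem_orb_iff N a b).mp hb
  have mem_of_eq : ∀ a b : Ω, MulAction.orbit N a = MulAction.orbit N b →
      b ∈ MulAction.orbit N a := fun a b heq => heq ▸ MulAction.mem_orbit_self b
  by_cases h1 : β ∈ MulAction.orbit N α ∧ γ ∈ MulAction.orbit N α
  · exact Or.inl h1
  · right
    -- derive orbit equalities from memberships
    have eq_of_mem : ∀ a b : Ω, b ∈ MulAction.orbit N a →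
        MulAction.orbit N a = MulAction.orbit N b := by
      intro a b hb
      exact (MulAction.orbit_eq_iff.mpr hb).symm
    refine ⟨?_, ?_, ?_⟩
    · -- orbit α ≠ orbit β
      intro heq
      obtain ⟨m, hm, hmαβ⟩ := orb_wit α β heq
      have hγnot : γ ∉ MulAction.orbit N α := by
        intro hγ
        exact h1 ⟨mem_of_eq α β heq, hγ⟩
      have hfixmβ : g • (m • α) = m • α := by rw [hmαβ, hgβ]
      have hfixmγ : g • (m • γ) = m • γ := key_fix hN hsemi hgα hgγ hm hfixmβ
      have hmem : m • γ ∈ fixedBy Ω g := hfixmγ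
      rw [hfixpts] at hmem
      exact helper hsemi hm hmαβ hαβ hγnot (by simpa using hmem)
    · -- orbit α ≠ orbit γ
      intro heq
      obtain ⟨m, hm, hmαγ⟩ := orb_wit α γ heq
      have hβnot : β ∉ MulAction.orbit N α := by
        intro hβ
        exact h1 ⟨hβ, mem_of_eq α γ heq⟩
      have hfixmγ : g • (m • α) = m • α := by rw [hmαγ, hgγ]
      have hfixmβ : g • (m • β) = m • β := key_fix hN hsemi hgα hgβ hm hfixmγ
      have hmem : m • β ∈ fixedBy Ω g := hfixmβ
      rw [hfixpts] at hmem
      apply helper hsemi hm hmαγ hαγ hβnot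
      rcases hmem with h | h | h
      · exact Or.inl h
      · exact Or.inr (Or.inr h)
      · exact Or.inr (Or.inl h)
    · -- orbit β ≠ orbit γ
      intro heq
      obtain ⟨m, hm, hmβγ⟩ := orb_wit β γ heq
      have hαnot : α ∉ MulAction.orbit N β := by
        intro hα
        have h2 : MulAction.orbit N β = MulAction.orbit N α := eq_of_mem β α hα
        apply h1
        constructor
        · exact mem_of_eq α β h2.symm
        · exact mem_of_eq α γ (h2.symm.trans heq)
      have hfixmγ : g • (m • β) = m • β := by rw [hmβγ, hgγ]
      have hfixmα : g • (m • α) = m • α := key_fix hN hsemi hgβ hgα hm hfixmγ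
      have hmem : m • α ∈ fixedBy Ω g := hfixmα
      rw [hfixpts] at hmem
      apply helper hsemi hm hmβγ hβγ hαnot
      rcases hmem with h | h | h
      · exact Or.inr (Or.inr h)
      · exact Or.inl h
      · exact Or.inr (Or.inl h)
end

section
/- Let G be a finite group acting transitively and faithfully with fixity 3 on a finite set Ω, and let N be a minimal normal subgroup of prime power order acting semi-regularly, with at least two N-orbits. If the induced action of G/N on the set of N-orbits is such that every nontrivial element of G/N fixes either exactly 0 or exactly 2 N-orbits, then |N| ∈ {3, 9}. -/
open MulAction Pointwise

private lemma aux_card_le {A : Type*} [Group A] [Finite A] {H K : Subgroup A} (h : H ≤ K) :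
    Nat.card H ≤ Nat.card K :=
  Nat.card_le_card_of_injective (fun x => ⟨x.1, h x.2⟩)
    (fun a b hab => by
      apply Subtype.ext
      injection hab)

private lemma aux_card_eq_mul {A B : Type*} [Group A] [Group B] [Finite A] (f : A →* B) :
    Nat.card A = Nat.card f.range * Nat.card f.ker := by
  rw [Subgroup.card_eq_card_quotient_mul_card_subgroup f.ker]
  congr 1
  exact Nat.card_congr (QuotientGroup.quotientKerEquivRange f).toEquiv

private lemma aux_card_lt {A : Type*} [Group A] [Finite A] {H K : Subgroup A} (h : H ≤ K)
    (c : A) (hcK : c ∈ K) (hcH : c ∉ H) : Nat.card H < Nat.card K := by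
  have hss : (H : Set A) ⊂ (K : Set A) := ⟨h, fun hsub => hcH (hsub hcK)⟩
  have h1 : Nat.card H = (H : Set A).ncard := rfl
  have h2 : Nat.card K = (K : Set A).ncard := rfl
  rw [h1, h2]
  exact Set.ncard_lt_ncard hss (Set.toFinite _)

private lemma alg_ne3 {A : Type*} [CommGroup A] [Finite A] (r : ℕ) (hr : r.Prime) (hr3 : r ≠ 3)
    (φ ψ : A →* A) (hker : Nat.card φ.ker = 3)
    (hψk : ∀ v ∈ φ.ker, ψ v = v ^ r)
    (hcomp : ∀ v : A, ψ (φ v) = 1)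
    (c : A) (hc1 : ψ c = 1) (hc2 : ∀ v, φ v ≠ c) : False := by
  -- an element of order 3 in ker φ
  have hnt : Nontrivial φ.ker := Finite.one_lt_card_iff_nontrivial.mp (by omega)
  obtain ⟨z, hz1⟩ := exists_ne (1 : φ.ker)
  have hzo : orderOf z = 3 := by
    have hdvd : orderOf z ∣ 3 := hker ▸ orderOf_dvd_natCard z
    rcases (Nat.prime_three.eq_one_or_self_of_dvd _ hdvd) with h | h
    · exact absurd (orderOf_eq_one_iff.mp h) hz1
    · exact h
  set w : A := (z : A) with hw
  have hwo : orderOf w = 3 := by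
    exact (orderOf_injective φ.ker.subtype φ.ker.subtype_injective z).trans hzo
  have hw3 : w ^ 3 = 1 := by rw [← hwo]; exact pow_orderOf_eq_one w
  have hψw : ψ w = w ^ r := hψk w z.2
  have hwr : w ^ r ≠ 1 := by
    intro h
    have : orderOf w ∣ r := orderOf_dvd_iff_pow_eq_one.mpr h
    rw [hwo] at this
    exact hr3 ((Nat.prime_dvd_prime_iff_eq Nat.prime_three hr).mp this).symm
  have hwro : orderOf (w ^ r) = 3 := by
    haveI : Fact (Nat.Prime 3) := ⟨Nat.prime_three⟩
    exact orderOf_eq_prime (by rw [← pow_mul, mul_comm, pow_mul, hw3, one_pow]) hwr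
  -- 3 ≤ card range ψ
  have h3R : 3 ≤ Nat.card ψ.range := by
    have hmem : w ^ r ∈ ψ.range := ⟨w, hψw⟩
    have : orderOf (⟨w ^ r, hmem⟩ : ψ.range) = 3 := by
      have h1 : orderOf (ψ.range.subtype ⟨w ^ r, hmem⟩) = orderOf (⟨w ^ r, hmem⟩ : ψ.range) :=
        orderOf_injective ψ.range.subtype ψ.range.subtype_injective _
      rw [← h1]
      exact hwro
    have hdvd : orderOf (⟨w ^ r, hmem⟩ : ψ.range) ∣ Nat.card ψ.range := orderOf_dvd_natCard _
    rw [this] at hdvd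
    exact Nat.le_of_dvd Nat.card_pos hdvd
  have hRK : φ.range ≤ ψ.ker := by
    rintro x ⟨v, rfl⟩
    exact hcomp v
  have hlt : Nat.card φ.range < Nat.card ψ.ker :=
    aux_card_lt hRK c hc1 (fun ⟨v, hv⟩ => hc2 v hv)
  have e1 : Nat.card A = Nat.card φ.range * 3 := hker ▸ aux_card_eq_mul φ
  have e2 : Nat.card A = Nat.card ψ.range * Nat.card ψ.ker := aux_card_eq_mul ψ
  nlinarith [e1, e2, h3R, hlt, Nat.card_pos (α := ψ.ker)]

private lemma alg_3 {A : Type*} [CommGroup A] [Finite A]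
    (φ ψ : A →* A) (hψφ : ∀ v : A, ψ v = φ (φ v))
    (hker : Nat.card φ.ker = 3)
    (hcomp : ∀ v : A, ψ (φ v) = 1)
    (n : ℕ) (hA : Nat.card A = 3 ^ n)
    (c : A) (hc1 : ψ c = 1) (hc2 : ∀ v, φ v ≠ c) : n ≤ 2 := by
  set θ : ψ.ker →* A := φ.comp ψ.ker.subtype with hθ
  have hrθ : Nat.card θ.range ≤ 3 := by
    refine hker ▸ aux_card_le ?_
    rintro x ⟨v, rfl⟩
    show φ (φ (v : A)) = 1
    rw [← hψφ]
    exact v.2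
  have hkθ : Nat.card θ.ker ≤ 3 := by
    have : Nat.card θ.ker ≤ Nat.card φ.ker := by
      refine Nat.card_le_card_of_injective (fun x => ⟨(x.1 : A), x.2⟩) ?_
      intro a b hab
      apply Subtype.ext
      apply Subtype.ext
      injection hab
    omega
  have h9 : Nat.card ψ.ker ≤ 9 := by
    have := aux_card_eq_mul θ
    nlinarith [this, hrθ, hkθ]
  have hRK : φ.range ≤ ψ.ker := by
    rintro x ⟨v, rfl⟩
    exact hcomp v
  have hlt : Nat.card φ.range < Nat.card ψ.ker :=
    aux_card_lt hRK c hc1 (fun ⟨v, hv⟩ => hc2 v hv)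
  have e1 : Nat.card A = Nat.card φ.range * 3 := hker ▸ aux_card_eq_mul φ
  by_contra hn
  push_neg at hn
  have h27 : (27 : ℕ) ≤ 3 ^ n := by
    calc (27:ℕ) = 3 ^ 3 := by norm_num
    _ ≤ 3 ^ n := Nat.pow_le_pow_right (by norm_num) hn
  omega

theorem stmt_12 (G Ω : Type*) [Group G] [Finite G] [MulAction G Ω] [Finite Ω]
    [FaithfulSMul G Ω] [IsPretransitive G Ω] (hfix : HasFixity G Ω 3)
    (N : Subgroup G) (hmin : IsMinimalNormal G N)
    (p : ℕ) (n : ℕ) (hp : p.Prime) (hcard : Nat.card N = p ^ n)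
    (hsemi : IsSemiregular G Ω N)
    (horb : 2 ≤ {s : Set Ω | IsOrbitOf G Ω N s}.ncard)
    (h02 : ∀ g : G, g ∉ N →
      {s : Set Ω | IsOrbitOf G Ω N s ∧ g • s = s}.ncard = 0 ∨
      {s : Set Ω | IsOrbitOf G Ω N s ∧ g • s = s}.ncard = 2) :
    Nat.card N = 3 ∨ Nat.card N = 9 := by
  classical
  obtain ⟨hbound, g₀, hg₀1, hg₀fix⟩ := hfix
  obtain ⟨hNnorm, hNbot, hNmin⟩ := hmin
  -- freeness of the N-action
  have hfree : ∀ (x : Ω) (a b : G), a ∈ N → b ∈ N → a • x = b • x → a = b := by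
    intro x a b ha hb hab
    by_contra hne
    have hmem : b⁻¹ * a ∈ N := mul_mem (inv_mem hb) ha
    have hne' : b⁻¹ * a ≠ 1 := by
      intro h
      rw [inv_mul_eq_one] at h
      exact hne h.symm
    apply hsemi _ hmem hne' x
    rw [mul_smul, hab, inv_smul_smul]
  have hfree' : ∀ (x : Ω) (a b : ↥N), (a : G) • x = (b : G) • x → a = b := by
    intro x a b h
    exact Subtype.ext (hfree x a b a.2 b.2 h)
  -- n ≥ 1
  have hn1 : 1 ≤ n := by
    rcases Nat.eq_zero_or_pos n with h | h
    · exfalso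
      apply hNbot
      apply Subgroup.card_eq_one.mp
      rw [hcard, h, pow_zero]
    · exact h
  -- N is commutative
  have hNcomm : ∀ a b : G, a ∈ N → b ∈ N → a * b = b * a := by
    set Z : Subgroup G := Subgroup.centralizer (N : Set G) ⊓ N with hZ_def
    have hZnorm : Z.Normal := by
      constructor
      intro z hz gg
      rw [Subgroup.mem_inf] at hz ⊢
      obtain ⟨hz1, hz2⟩ := hz
      constructor
      · rw [Subgroup.mem_centralizer_iff] at hz1 ⊢
        intro y hy
        have hy' : gg⁻¹ * y * gg ∈ (N : Set G) := by
          have h0 := hNnorm.conj_mem y hy gg⁻¹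
          simpa using h0
        have h2 := hz1 _ hy'
        calc y * (gg * z * gg⁻¹) = gg * ((gg⁻¹ * y * gg) * z) * gg⁻¹ := by group
        _ = gg * (z * (gg⁻¹ * y * gg)) * gg⁻¹ := by rw [h2]
        _ = (gg * z * gg⁻¹) * y := by group
      · exact hNnorm.conj_mem z hz2 gg
    have hZbot : Z ≠ ⊥ := by
      have hpg : IsPGroup p ↥N := IsPGroup.of_card hcard
      haveI : Nontrivial ↥N := by
        apply Finite.one_lt_card_iff_nontrivial.mp
        rw [hcard]
        have h2 := hp.two_le
        calc 1 < p := by omega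
        _ ≤ p ^ n := Nat.le_self_pow (by omega) p
      haveI : Fact p.Prime := ⟨hp⟩
      have hcn : Nontrivial (Subgroup.center ↥N) := hpg.center_nontrivial
      obtain ⟨z, hz1⟩ := exists_ne (1 : Subgroup.center ↥N)
      intro hbot
      apply hz1
      have hzZ : ((z : ↥N) : G) ∈ Z := by
        rw [hZ_def, Subgroup.mem_inf]
        refine ⟨?_, (z : ↥N).2⟩
        rw [Subgroup.mem_centralizer_iff]
        intro y hy
        have h3 := (Subgroup.mem_center_iff.mp z.2) ⟨y, hy⟩
        exact congrArg Subtype.val h3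
      rw [hbot, Subgroup.mem_bot] at hzZ
      apply Subtype.ext
      apply Subtype.ext
      exact hzZ
    rcases hNmin Z hZnorm inf_le_right with h | h
    · exact absurd h hZbot
    · intro a b ha hb
      have hbZ : b ∈ Z := h ▸ hb
      exact (Subgroup.mem_inf.mp hbZ).1 a ha
  -- exponent p
  have hNpow : ∀ a : G, a ∈ N → a ^ p = 1 := by
    set E : Subgroup G :=
      { carrier := {x : G | x ∈ N ∧ x ^ p = 1}
        one_mem' := ⟨one_mem N, one_pow p⟩
        mul_mem' := by
          rintro x y ⟨hxN, hxp⟩ ⟨hyN, hyp⟩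
          refine ⟨mul_mem hxN hyN, ?_⟩
          rw [Commute.mul_pow (hNcomm x y hxN hyN), hxp, hyp, one_mul]
        inv_mem' := by
          rintro x ⟨hxN, hxp⟩
          exact ⟨inv_mem hxN, by rw [inv_pow, hxp, inv_one]⟩ } with hE_def
    have hEnorm : E.Normal := by
      constructor
      rintro x ⟨hxN, hxp⟩ gg
      refine ⟨hNnorm.conj_mem x hxN gg, ?_⟩
      have hconj : ∀ k : ℕ, (gg * x * gg⁻¹) ^ k = gg * x ^ k * gg⁻¹ := by
        intro k
        induction k with
        | zero => simp
        | succ m ih => rw [pow_succ, ih, pow_succ]; group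
      rw [hconj p, hxp]
      group
    have hEbot : E ≠ ⊥ := by
      haveI : Fintype ↥N := Fintype.ofFinite ↥N
      haveI : Fact p.Prime := ⟨hp⟩
      have hpdvd : p ∣ Fintype.card ↥N := by
        rw [← Nat.card_eq_fintype_card, hcard]
        exact dvd_pow_self p (by omega)
      obtain ⟨y, hy⟩ := exists_prime_orderOf_dvd_card p hpdvd
      intro hbot
      have hyE : ((y : ↥N) : G) ∈ E := by
        refine ⟨y.2, ?_⟩
        have h1 := pow_orderOf_eq_one y
        rw [hy] at h1
        have h2 := congrArg (Subtype.val) h1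
        push_cast at h2
        exact h2
      rw [hbot, Subgroup.mem_bot] at hyE
      have hy1 : y = 1 := Subtype.ext hyE
      rw [hy1, orderOf_one] at hy
      exact hp.ne_one hy.symm
    rcases hNmin E hEnorm (fun x hx => hx.1) with h | h
    · exact absurd h hEbot
    · intro a ha
      exact (h ▸ ha : a ∈ E).2
  -- every element of G fixing a point of a set fixes its N-orbit setwise
  have horbfix : ∀ (gg : G) (x : Ω), gg • x = x → gg • (orbit N x) = orbit N x := by
    intro gg x hx
    have hxinv : gg⁻¹ • x = x := by conv_lhs => rw [← hx, inv_smul_smul]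
    ext y
    simp only [Set.mem_smul_set, MulAction.mem_orbit_iff, Subgroup.smul_def, Subtype.exists,
      exists_prop]
    constructor
    · rintro ⟨z, ⟨v, hvN, rfl⟩, rfl⟩
      exact ⟨gg * v * gg⁻¹, hNnorm.conj_mem v hvN gg,
        by rw [mul_smul, hxinv, mul_smul]⟩
    · rintro ⟨v, hvN, rfl⟩
      refine ⟨(gg⁻¹ * v * gg) • x, ⟨gg⁻¹ * v * gg,
        by simpa using hNnorm.conj_mem v hvN gg⁻¹, rfl⟩, ?_⟩
      rw [smul_smul, show gg * (gg⁻¹ * v * gg) = v * gg from by group, mul_smul, hx]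
  -- a nontrivial element with a fixed point is not in N
  have hnotinN : ∀ gg : G, gg ≠ 1 → ∀ x : Ω, gg • x = x → gg ∉ N := by
    intro gg h1 x hx hgN
    exact hsemi gg hgN h1 x hx
  -- points in an orbit are orbit-generic
  have horbeq : ∀ (x y : Ω), y ∈ orbit N x → orbit N y = orbit N x := by
    rintro x y ⟨m, rfl⟩
    exact orbit_smul m x
  -- replace g₀ by a power of prime order
  set r := (orderOf g₀).minFac with hr_def
  have hordpos : 0 < orderOf g₀ := orderOf_pos g₀
  have hord1 : orderOf g₀ ≠ 1 := fun h => hg₀1 (orderOf_eq_one_iff.mp h)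
  have hrprime : r.Prime := Nat.minFac_prime hord1
  have hrdvd : r ∣ orderOf g₀ := Nat.minFac_dvd _
  set g := g₀ ^ (orderOf g₀ / r) with hg_def
  have hgord : orderOf g = r := by
    rw [hg_def, orderOf_pow]
    rw [Nat.gcd_eq_right (Nat.div_dvd_of_dvd hrdvd)]
    exact Nat.div_div_self hrdvd hordpos.ne'
  have hg1 : g ≠ 1 := by
    intro h
    rw [h, orderOf_one] at hgord
    exact hrprime.ne_one hgord.symm
  have hgsub : fixedBy Ω g₀ ⊆ fixedBy Ω g := by
    intro x hx
    rw [mem_fixedBy] at hx ⊢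
    rw [hg_def]
    clear_value r
    generalize orderOf g₀ / r = k
    induction k with
    | zero => simp
    | succ m ih => rw [pow_succ, mul_smul, hx, ih]
  have hgfix : (fixedBy Ω g).ncard = 3 := by
    have h1 : (3:ℕ) ≤ (fixedBy Ω g).ncard := hg₀fix ▸ Set.ncard_le_ncard hgsub (Set.toFinite _)
    have h2 := hbound g hg1
    omega
  -- a fixed point ω of g
  have hFne : (fixedBy Ω g).Nonempty := Set.nonempty_of_ncard_ne_zero (by omega)
  obtain ⟨ω, hω⟩ := hFne
  rw [mem_fixedBy] at hω
  have hgN : g ∉ N := hnotinN g hg1 ω hω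
  -- the conjugation monoid hom
  letI : CommGroup ↥N :=
    { (inferInstance : Group ↥N) with
      mul_comm := fun a b => Subtype.ext (hNcomm a b a.2 b.2) }
  set τ : ↥N →* ↥N :=
    { toFun := fun v => ⟨g * v * g⁻¹, hNnorm.conj_mem v.1 v.2 g⟩
      map_one' := by
        apply Subtype.ext
        show g * 1 * g⁻¹ = 1
        group
      map_mul' := by
        intro a b
        apply Subtype.ext
        show g * ((a:G) * b) * g⁻¹ = (g * a * g⁻¹) * (g * b * g⁻¹)
        group } with hτ_def
  set φ : ↥N →* ↥N :=
    { toFun := fun v => (τ v)⁻¹ * v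
      map_one' := by
        show (τ 1)⁻¹ * (1 : ↥N) = 1
        rw [map_one, mul_one, inv_one]
      map_mul' := by
        intro a b
        show (τ (a * b))⁻¹ * (a * b) = ((τ a)⁻¹ * a) * ((τ b)⁻¹ * b)
        rw [map_mul, mul_inv]
        exact mul_mul_mul_comm _ _ _ _ } with hφ_def
  have hφker : ∀ v : ↥N, v ∈ φ.ker ↔ τ v = v := by
    intro v
    rw [MonoidHom.mem_ker]
    show (τ v)⁻¹ * v = 1 ↔ _
    rw [inv_mul_eq_one]
  -- iterates of τ
  have hiter : ∀ (k : ℕ) (v : ↥N), (((⇑τ)^[k] v : ↥N) : G) = g ^ k * v * (g ^ k)⁻¹ := by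
    intro k
    induction k with
    | zero => intro v; simp
    | succ m ih =>
      intro v
      rw [Function.iterate_succ_apply']
      show g * (((⇑τ)^[m] v : ↥N) : G) * g⁻¹ = _
      rw [ih v, pow_succ']
      group
  have hiterr : ∀ v : ↥N, (⇑τ)^[r] v = v := by
    intro v
    apply Subtype.ext
    rw [hiter r v, ← hgord, pow_orderOf_eq_one]
    group
  -- the norm homomorphism
  set ψ : ↥N →* ↥N :=
    { toFun := fun v => ∏ i ∈ Finset.range r, (⇑τ)^[i] v
      map_one' := by
        show (∏ i ∈ Finset.range r, (⇑τ)^[i] 1) = 1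
        apply Finset.prod_eq_one
        intro i _
        exact Function.iterate_fixed (map_one τ) i
      map_mul' := by
        intro a b
        show (∏ i ∈ Finset.range r, (⇑τ)^[i] (a * b))
            = (∏ i ∈ Finset.range r, (⇑τ)^[i] a) * ∏ i ∈ Finset.range r, (⇑τ)^[i] b
        rw [← Finset.prod_mul_distrib]
        apply Finset.prod_congr rfl
        intro i hi
        clear hi
        induction i with
        | zero => simp
        | succ m ih =>
          rw [Function.iterate_succ_apply', Function.iterate_succ_apply',
            Function.iterate_succ_apply', ih]
          exact map_mul τ _ _ } with hψ_def
  -- ψ ∘ φ = 1 (telescoping)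
  have hcomp : ∀ v : ↥N, ψ (φ v) = 1 := by
    intro v
    have hterm : ∀ i : ℕ, (⇑τ)^[i] (φ v) = ((⇑τ)^[i+1] v)⁻¹ * (⇑τ)^[i] v := by
      intro i
      induction i with
      | zero =>
        simp only [Function.iterate_zero_apply, Function.iterate_one]
        rfl
      | succ m ih =>
        rw [Function.iterate_succ_apply' (⇑τ) m (φ v), ih, map_mul, map_inv,
          ← Function.iterate_succ_apply' (⇑τ) (m+1) v,
          ← Function.iterate_succ_apply' (⇑τ) m v]
    have h1 : ψ (φ v) = ∏ i ∈ Finset.range r, ((⇑τ)^[i] v / (⇑τ)^[i+1] v) := by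
      show (∏ i ∈ Finset.range r, (⇑τ)^[i] (φ v)) = _
      refine Finset.prod_congr rfl (fun i _ => ?_)
      rw [hterm i, div_eq_mul_inv, mul_comm]
    rw [h1, Finset.prod_range_div' (fun i => (⇑τ)^[i] v) r]
    rw [Function.iterate_zero_apply, hiterr v]
    exact div_self' v
  -- ψ on ker φ is the r-th power
  have hψk : ∀ v ∈ φ.ker, ψ v = v ^ r := by
    intro v hv
    have hτv : τ v = v := (hφker v).mp hv
    show (∏ i ∈ Finset.range r, (⇑τ)^[i] v) = v ^ r
    have h1 : ∀ i ∈ Finset.range r, (⇑τ)^[i] v = v :=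
      fun i _ => Function.iterate_fixed hτv i
    rw [Finset.prod_congr rfl h1, Finset.prod_const, Finset.card_range]
  -- counting fixed points in an orbit
  have hBcount : ∀ x : Ω, g • x = x → (fixedBy Ω g ∩ orbit N x).ncard = Nat.card φ.ker := by
    intro x hx
    have hxinv : g⁻¹ • x = x := by conv_lhs => rw [← hx, inv_smul_smul]
    have hstep : ∀ v : ↥N, g • ((v : G) • x) = ((τ v : ↥N) : G) • x := by
      intro v
      show g • ((v:G) • x) = (g * (v:G) * g⁻¹) • x
      rw [mul_smul (g * (v:G)) g⁻¹, hxinv, mul_smul]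
    have himg : fixedBy Ω g ∩ orbit N x = (fun z : ↥φ.ker => ((z : ↥N) : G) • x) '' Set.univ := by
      ext y
      constructor
      · rintro ⟨hyF, v, rfl⟩
        have hyF' : g • ((v:G) • x) = (v:G) • x := hyF
        have h2 : τ v = v := hfree' x (τ v) v (by rw [← hstep v]; exact hyF')
        exact ⟨⟨v, (hφker v).mpr h2⟩, Set.mem_univ _, rfl⟩
      · rintro ⟨z, -, rfl⟩
        refine ⟨?_, (z : ↥N), rfl⟩
        show g • (((z : ↥N) : G) • x) = ((z : ↥N) : G) • x
        rw [hstep (z : ↥N), (hφker _).mp z.2]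
    rw [himg, Set.ncard_image_of_injective _ ?_, Set.ncard_univ]
    intro z z' hzz
    exact Subtype.ext (hfree' x _ _ hzz)
  -- the set of fixed orbits has exactly two elements
  set S : Set (Set Ω) := {s : Set Ω | IsOrbitOf G Ω N s ∧ g • s = s} with hS_def
  have hBS : orbit N ω ∈ S := ⟨⟨ω, rfl⟩, horbfix g ω hω⟩
  have hS2 : S.ncard = 2 := by
    rcases h02 g hgN with h | h
    · rw [← hS_def] at h
      exfalso
      rw [Set.ncard_eq_zero (Set.toFinite _)] at h
      rw [h] at hBS
      exact hBS
    · rw [← hS_def] at h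
      exact h
  -- all fixed points of g lie in orbit N ω, and the kernel has 3 elements
  have hmain : (∀ x ∈ fixedBy Ω g, x ∈ orbit N ω) ∧ Nat.card φ.ker = 3 := by
    by_cases hsub : ∀ x ∈ fixedBy Ω g, x ∈ orbit N ω
    · refine ⟨hsub, ?_⟩
      have h1 : fixedBy Ω g ∩ orbit N ω = fixedBy Ω g := Set.inter_eq_left.mpr hsub
      rw [← hBcount ω hω, h1, hgfix]
    · exfalso
      push_neg at hsub
      obtain ⟨x, hxF, hxB⟩ := hsub
      have hx : g • x = x := mem_fixedBy.mp hxF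
      have hdisj : Disjoint (fixedBy Ω g ∩ orbit N ω) (fixedBy Ω g ∩ orbit N x) := by
        rw [Set.disjoint_left]
        rintro y ⟨-, hy1⟩ ⟨-, hy2⟩
        apply hxB
        have e1 : orbit N y = orbit N ω := horbeq ω y hy1
        have e2 : orbit N y = orbit N x := horbeq x y hy2
        rw [← e1, e2]
        exact mem_orbit_self x
      have hcard1 : (fixedBy Ω g ∩ orbit N ω).ncard = Nat.card φ.ker := hBcount ω hω
      have hcard2 : (fixedBy Ω g ∩ orbit N x).ncard = Nat.card φ.ker := hBcount x hx
      have hunion : ((fixedBy Ω g ∩ orbit N ω) ∪ (fixedBy Ω g ∩ orbit N x)).ncard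
          = 2 * Nat.card φ.ker := by
        rw [Set.ncard_union_eq hdisj (Set.toFinite _) (Set.toFinite _), hcard1, hcard2]
        ring
      have hle : ((fixedBy Ω g ∩ orbit N ω) ∪ (fixedBy Ω g ∩ orbit N x)).ncard ≤ 3 := by
        rw [← hgfix]
        apply Set.ncard_le_ncard _ (Set.toFinite _)
        rintro y (⟨h,-⟩|⟨h,-⟩) <;> exact h
      have hpos1 : 0 < (fixedBy Ω g ∩ orbit N ω).ncard := by
        rw [Set.ncard_pos (Set.toFinite _)]
        exact ⟨ω, mem_fixedBy.mpr hω, mem_orbit_self ω⟩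
      have hk1 : Nat.card φ.ker = 1 := by omega
      have hsing : ∀ y : Ω, g • y = y → fixedBy Ω g ∩ orbit N y = {y} := by
        intro y hy
        have h1 : (fixedBy Ω g ∩ orbit N y).ncard = 1 := by rw [hBcount y hy, hk1]
        obtain ⟨a, ha⟩ := Set.ncard_eq_one.mp h1
        have hyin : y ∈ fixedBy Ω g ∩ orbit N y := ⟨mem_fixedBy.mpr hy, mem_orbit_self y⟩
        rw [ha] at hyin ⊢
        rw [Set.mem_singleton_iff] at hyin
        rw [hyin]
      have hinj : Set.InjOn (fun y => orbit N y) (fixedBy Ω g) := by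
        intro y1 h1 y2 h2 he
        have he' : orbit N y1 = orbit N y2 := he
        have h3 : y2 ∈ fixedBy Ω g ∩ orbit N y1 := ⟨h2, by
          rw [he']
          exact mem_orbit_self y2⟩
        rw [hsing y1 (mem_fixedBy.mp h1)] at h3
        exact (Set.mem_singleton_iff.mp h3).symm
      have himage : ((fun y => orbit N y) '' (fixedBy Ω g)) ⊆ S := by
        rintro s ⟨y, hyF, rfl⟩
        exact ⟨⟨y, rfl⟩, horbfix g y (mem_fixedBy.mp hyF)⟩
      have h3 : ((fun y => orbit N y) '' (fixedBy Ω g)).ncard = 3 := by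
        rw [Set.ncard_image_of_injOn hinj, hgfix]
      have h4 := Set.ncard_le_ncard himage (Set.toFinite _)
      rw [h3, hS2] at h4
      omega
  obtain ⟨hFsub, hker3⟩ := hmain
  -- p = 3
  have hp3 : p = 3 := by
    have hdvd : Nat.card φ.ker ∣ Nat.card ↥N := Subgroup.card_subgroup_dvd_card φ.ker
    rw [hker3, hcard] at hdvd
    have h3p : (3:ℕ) ∣ p := Nat.prime_three.dvd_of_dvd_pow hdvd
    exact ((Nat.prime_dvd_prime_iff_eq Nat.prime_three hp).mp h3p).symm
  -- the second fixed orbit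
  obtain ⟨s₁, s₂, hs12, hSeq⟩ := Set.ncard_eq_two.mp hS2
  have hB'ex : ∃ B' ∈ S, B' ≠ orbit N ω := by
    rcases (hSeq ▸ hBS : orbit N ω ∈ ({s₁, s₂} : Set (Set Ω))) with h | h
    · exact ⟨s₂, hSeq ▸ Set.mem_insert_iff.mpr (Or.inr rfl), by rw [h]; exact hs12.symm⟩
    · exact ⟨s₁, hSeq ▸ Set.mem_insert_iff.mpr (Or.inl rfl), by rw [h]; exact hs12⟩
  obtain ⟨B', ⟨⟨ω', hB'⟩, hB'fix⟩, hB'ne⟩ := hB'ex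
  -- the translation element c
  have hgω' : g • ω' ∈ orbit N ω' := by
    have h1 : ω' ∈ B' := hB' ▸ mem_orbit_self ω'
    have h2 : g • ω' ∈ g • B' := Set.smul_mem_smul_set h1
    rw [hB'fix, hB'] at h2
    exact h2
  obtain ⟨c, hc⟩ := hgω'
  -- no fixed point of g in B'
  have hnofix : ∀ v : ↥N, g • ((v : G) • ω') ≠ (v : G) • ω' := by
    intro v hv
    have h1 : (v : G) • ω' ∈ fixedBy Ω g := mem_fixedBy.mpr hv
    have h2 : (v : G) • ω' ∈ orbit N ω := hFsub _ h1
    have h3 : (v : G) • ω' ∈ orbit N ω' := ⟨v, rfl⟩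
    apply hB'ne
    rw [hB', ← horbeq ω' _ h3, horbeq ω _ h2]
  -- hc2 : c is not in the range of φ
  have hc2 : ∀ v : ↥N, φ v ≠ c := by
    intro v hv
    apply hnofix v
    have h1 : g • ((v:G) • ω') = ((τ v : ↥N) : G) • (g • ω') := by
      show _ = ((g * v * g⁻¹ : G)) • (g • ω')
      rw [smul_smul, smul_smul]
      congr 1
      group
    rw [h1, ← hc]
    show ((τ v : ↥N) : G) • ((c : ↥N) : G) • ω' = (v : G) • ω'
    rw [smul_smul, ← Subgroup.coe_mul]
    have h2 : (τ v) * c = v := by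
      have h3 : (τ v)⁻¹ * v = c := hv
      rw [← h3]
      group
    rw [h2]
  -- hc1 : ψ c = 1
  have hc' : (c : G) • ω' = g • ω' := by rw [← Subgroup.smul_def]; exact hc
  have hc1 : ψ c = 1 := by
    have hQ : ∀ k : ℕ, g ^ k • ω' = ((∏ i ∈ Finset.range k, (⇑τ)^[i] c : ↥N) : G) • ω' := by
      intro k
      induction k with
      | zero => simp
      | succ m ih =>
        have hstep : (∏ i ∈ Finset.range (m+1), (⇑τ)^[i] c)
            = τ (∏ i ∈ Finset.range m, (⇑τ)^[i] c) * c := by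
          rw [Finset.prod_range_succ', Function.iterate_zero_apply, map_prod]
          congr 1
          refine Finset.prod_congr rfl (fun i _ => ?_)
          rw [Function.iterate_succ_apply']
        rw [hstep, pow_succ', mul_smul, ih]
        set P : ↥N := ∏ i ∈ Finset.range m, (⇑τ)^[i] c with hP
        rw [smul_smul]
        have e : ((τ P * c : ↥N) : G) • ω' = (g * (P:G) * g⁻¹) • ((c:G) • ω') := by
          rw [smul_smul]
          rfl
        rw [e, hc', smul_smul]
        congr 1
        group
    have h1 := hQ r
    have hgr : g ^ r = 1 := by rw [← hgord]; exact pow_orderOf_eq_one g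
    rw [hgr, one_smul] at h1
    apply hfree' ω' (ψ c) 1
    show ((ψ c : ↥N) : G) • ω' = ((1 : ↥N) : G) • ω'
    rw [OneMemClass.coe_one, one_smul]
    exact h1.symm
  -- case split on r
  rcases eq_or_ne r 3 with hr3 | hr3
  · -- r = 3 : the main case
    have h3pow : ∀ a : ↥N, a * a * a = 1 := by
      intro a
      have h := hNpow a a.2
      rw [hp3] at h
      apply Subtype.ext
      show ((a:G) * a) * a = (1 : G)
      rw [← h]
      rw [pow_succ, pow_two]
    have hψφ : ∀ v : ↥N, ψ v = φ (φ v) := by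
      intro v
      have hb : (τ v)⁻¹ * (τ v)⁻¹ = τ v := by
        have e1 : ((τ v)⁻¹ * (τ v)⁻¹) * (τ v * τ v) = 1 := by group
        have e2 : (τ v) * (τ v * τ v) = 1 := by rw [← mul_assoc]; exact h3pow (τ v)
        exact mul_right_cancel (e1.trans e2.symm)
      have i2 : (⇑τ)^[2] v = τ (τ v) := by
        rw [show (2:ℕ) = 1+1 from rfl, Function.iterate_succ_apply', Function.iterate_one]
      show (∏ i ∈ Finset.range r, (⇑τ)^[i] v) = φ (φ v)
      rw [hr3, show (3:ℕ) = 2+1 from rfl, Finset.prod_range_succ, Finset.prod_range_succ,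
        Finset.prod_range_one, Function.iterate_zero_apply, Function.iterate_one, i2]
      show v * τ v * τ (τ v) = (τ ((τ v)⁻¹ * v))⁻¹ * ((τ v)⁻¹ * v)
      rw [map_mul, map_inv, mul_inv, inv_inv]
      rw [show τ (τ v) * (τ v)⁻¹ * ((τ v)⁻¹ * v) = τ (τ v) * ((τ v)⁻¹ * (τ v)⁻¹) * v from by
        group, hb]
      calc v * τ v * τ (τ v) = τ (τ v) * (v * τ v) := mul_comm _ _
      _ = τ (τ v) * (τ v * v) := by rw [mul_comm v (τ v)]
      _ = τ (τ v) * τ v * v := (mul_assoc _ _ _).symm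
    have hn2 : n ≤ 2 := alg_3 φ ψ hψφ hker3 hcomp n (hp3 ▸ hcard) c hc1 hc2
    rw [hcard, hp3]
    interval_cases n
    · left; rfl
    · right; rfl
  · -- r ≠ 3 : contradiction
    exact absurd (alg_ne3 r hrprime hr3 φ ψ hker3 hψk hcomp c hc1 hc2) not_false
end

section
/- The subgroup G = ⟨(1,2,3), (2,5,3,6)(1,4)⟩ of Alt_6 acts transitively and faithfully on {1,...,6} with fixity 3, has order 36, contains the minimal normal subgroup ⟨(1,2,3),(4,5,6)⟩ of order 9, and its point stabilizers are isomorphic to Sym_3. -/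
/-
With `a' = b a b⁻¹ = c[3, 4, 5]` one has `b a' b⁻¹ = a⁻¹`, so `b` normalizes `N = ⟨a, a'⟩ ≅ C₃ × C₃`
and every element of `G` is uniquely `a ^ i * a' ^ j * b ^ k` with `i, j < 3`, `k < 4`; the finite
checks run over these 36 normal forms. `G` preserves the blocks `{0, 1, 2}` and `{3, 4, 5}`, and
being transitive its point stabilizers have order `36 / 6 = 6`; they act faithfully on the block
not containing the point, hence are `Sym₃`. `N` is minimal normal because `b` acts on `N ≅ 𝔽₃²`
with characteristic polynomial `X² + 1`, irreducible over `𝔽₃`, so any `n ≠ 1` in `N` together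
with `b n b⁻¹` generates `N`.
-/

open MulAction Pointwise

open Equiv Nat

theorem Subgroup.coe_closure_eq_of_mul_mem {G : Type*} [Group G] [Finite G] {s S : Set G}
    (hS : S ⊆ closure s) (one : 1 ∈ S) (mul : ∀ x ∈ s, ∀ y ∈ S, x * y ∈ S) :
    (closure s : Set G) = S := by
  refine subset_antisymm (fun g hg => ?_) hS
  rw [SetLike.mem_coe, ← mem_toSubmonoid, closure_toSubmonoid_of_finite] at hg
  induction hg using Submonoid.closure_induction_left with
  | one => exact one
  | mul_left x hx y _ ih => exact mul x hx y ih

theorem Subgroup.mem_normalizer_of_conj_mem {G : Type*} [Group G] [Finite G] {H : Subgroup G}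
    {g : G} (h : ∀ n ∈ H, g * n * g⁻¹ ∈ H) : g ∈ normalizer H := by
  rw [mem_normalizer_iff_map_conj_eq]
  refine eq_of_le_of_card_ge (fun _ ⟨n, hn, hgn⟩ => hgn ▸ h n hn) ?_
  rw [card_map_of_injective (MulAut.conj g).injective]

theorem isMinimalNormal_subgroupOf {G : Type*} [Group G] {K N : Subgroup G} (hNK : N ≤ K)
    (hnorm : K ≤ Subgroup.normalizer N) (hne : N ≠ ⊥)
    (hgen : ∀ n ∈ N, n ≠ 1 → ∃ g ∈ K, N ≤ Subgroup.closure {n, g * n * g⁻¹}) :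
    IsMinimalNormal K (N.subgroupOf K) := by
  refine ⟨(Subgroup.normal_subgroupOf_iff_le_normalizer hNK).2 hnorm, ?_, fun M hM hMN => ?_⟩
  · rwa [Ne, Subgroup.subgroupOf_eq_bot, disjoint_of_le_iff_left_eq_bot hNK]
  rcases eq_or_ne M ⊥ with hbot | hbot
  · exact Or.inl hbot
  obtain ⟨⟨m, hmM⟩, hm⟩ := Subgroup.ne_bot_iff_exists_ne_one.1 hbot
  obtain ⟨g, hgK, hN⟩ := hgen m (hMN hmM) (by simpa using hm)
  have hclosure : Subgroup.closure {(m : G), g * m * g⁻¹} ≤ M.map K.subtype := by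
    rw [Subgroup.closure_le, Set.insert_subset_iff, Set.singleton_subset_iff]
    exact ⟨⟨m, hmM, rfl⟩, ⟨_, hM.conj_mem m hmM ⟨g, hgK⟩, rfl⟩⟩
  refine Or.inr (le_antisymm hMN fun x hx => ?_)
  exact (Subgroup.mem_map_iff_mem K.subtype_injective).1 (hclosure (hN hx))

theorem MulAction.nonempty_mulEquiv_perm_of_faithful_on {H α β : Type*} [Group H]
    [MulAction H α] [Finite H] [Fintype β] (B : Set α) (e : B ≃ β)
    (hmaps : ∀ h : H, ∀ x ∈ B, h • x ∈ B) (hfaithful : ∀ h : H, (∀ x ∈ B, h • x = x) → h = 1)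
    (hcard : Nat.card H = (Fintype.card β)!) : Nonempty (H ≃* Perm β) := by
  let B' : SubMulAction H α := ⟨B, fun h _ hx => hmaps h _ hx⟩
  let e' : B' ≃ β := e
  have : Finite B' := .of_equiv _ e'.symm
  have hinj : Function.Injective (toPermHom H B') := by
    refine (injective_iff_map_eq_one _).2 fun h hh => hfaithful h fun x hx => ?_
    exact congrArg Subtype.val (Equiv.ext_iff.1 hh ⟨x, hx⟩)
  have hbij := hinj.bijective_of_nat_card_le <| by
    rw [Nat.card_perm, hcard, Nat.card_congr e', Nat.card_eq_fintype_card]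
  exact ⟨(MulEquiv.ofBijective _ hbij).trans e'.permCongrHom⟩

theorem Equiv.Perm.ncard_setOf_apply_eq_self {α : Type*} [Fintype α] [DecidableEq α]
    (g : Perm α) : {i | g i = i}.ncard = (Finset.univ.filter fun i => g i = i).card := by
  simp only [← Set.ncard_coe_finset, Finset.coe_filter, Finset.mem_univ, true_and]

namespace ThreeSqFour

def a : Perm (Fin 6) := c[0, 1, 2]
def b : Perm (Fin 6) := c[1, 4, 2, 5] * c[0, 3]
def a' : Perm (Fin 6) := c[3, 4, 5]

def G : Subgroup (Perm (Fin 6)) := Subgroup.closure {a, b}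
def N : Subgroup (Perm (Fin 6)) := Subgroup.closure {a, a'}

def nword (x : Fin 3 × Fin 3) : Perm (Fin 6) := a ^ (x.1 : ℕ) * a' ^ (x.2 : ℕ)

def word (x : Fin 3 × Fin 3 × Fin 4) : Perm (Fin 6) := nword (x.1, x.2.1) * b ^ (x.2.2 : ℕ)

theorem conj_b_a : b * a * b⁻¹ = a' := by decide

theorem a_mem_G : a ∈ G := Subgroup.subset_closure (by simp)

theorem b_mem_G : b ∈ G := Subgroup.subset_closure (by simp)

theorem a'_mem_G : a' ∈ G := conj_b_a ▸ mul_mem (mul_mem b_mem_G a_mem_G) (inv_mem b_mem_G)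

theorem a_mem_N : a ∈ N := Subgroup.subset_closure (by simp)

theorem a'_mem_N : a' ∈ N := Subgroup.subset_closure (by simp)

theorem nword_mem_N (x : Fin 3 × Fin 3) : nword x ∈ N :=
  mul_mem (pow_mem a_mem_N _) (pow_mem a'_mem_N _)

theorem N_le_G : N ≤ G := by
  rw [N, Subgroup.closure_le, Set.insert_subset_iff, Set.singleton_subset_iff]
  exact ⟨a_mem_G, a'_mem_G⟩

theorem word_mem_G (x : Fin 3 × Fin 3 × Fin 4) : word x ∈ G :=
  mul_mem (N_le_G (nword_mem_N _)) (pow_mem b_mem_G _)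

theorem coe_N : (N : Set (Perm (Fin 6))) = Set.range nword := by
  refine Subgroup.coe_closure_eq_of_mul_mem (Set.range_subset_iff.2 nword_mem_N) ⟨0, rfl⟩ ?_
  have ha (x) : a * nword x = nword (x.1 + 1, x.2) := by revert x; decide
  have ha' (x) : a' * nword x = nword (x.1, x.2 + 1) := by revert x; decide
  rintro _ (rfl | rfl) _ ⟨x, rfl⟩
  exacts [⟨_, (ha x).symm⟩, ⟨_, (ha' x).symm⟩]

theorem coe_G : (G : Set (Perm (Fin 6))) = Set.range word := by
  refine Subgroup.coe_closure_eq_of_mul_mem (Set.range_subset_iff.2 word_mem_G) ⟨0, rfl⟩ ?_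
  have ha (x) : a * word x = word (x.1 + 1, x.2.1, x.2.2) := by revert x; decide +kernel
  have hb (x) : b * word x = word (-x.2.1, x.1, x.2.2 + 1) := by revert x; decide +kernel
  rintro _ (rfl | rfl) _ ⟨x, rfl⟩
  exacts [⟨_, (ha x).symm⟩, ⟨_, (hb x).symm⟩]

theorem mem_N {g : Perm (Fin 6)} : g ∈ N ↔ ∃ x, nword x = g := by
  rw [← SetLike.mem_coe, coe_N, Set.mem_range]

theorem mem_G {g : Perm (Fin 6)} : g ∈ G ↔ ∃ x, word x = g := by
  rw [← SetLike.mem_coe, coe_G, Set.mem_range]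

theorem card_N : Nat.card N = 9 := by
  rw [← SetLike.coe_sort_coe, coe_N, Nat.card_range_of_injective (by decide)]
  simp

theorem card_G : Nat.card G = 36 := by
  rw [← SetLike.coe_sort_coe, coe_G, Nat.card_range_of_injective (by decide +kernel)]
  simp

theorem G_le_alternatingGroup : G ≤ alternatingGroup (Fin 6) := by
  rw [G, Subgroup.closure_le, Set.insert_subset_iff, Set.singleton_subset_iff]
  simp only [SetLike.mem_coe, Equiv.Perm.mem_alternatingGroup]
  exact ⟨by decide, by decide⟩

instance : MulAction.IsPretransitive G (Fin 6) := by
  refine ⟨fun i j => ?_⟩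
  obtain ⟨x, hx⟩ : ∃ x, word x i = j := by revert i j; decide +kernel
  exact ⟨⟨word x, word_mem_G x⟩, hx⟩

theorem ncard_fixedPoints_le_three {g : Perm (Fin 6)} (hg : g ∈ G) (h1 : g ≠ 1) :
    {i | g i = i}.ncard ≤ 3 := by
  obtain ⟨x, rfl⟩ := mem_G.1 hg
  clear hg
  rw [Perm.ncard_setOf_apply_eq_self]
  revert x; decide +kernel

theorem ncard_fixedPoints_a : {i | a i = i}.ncard = 3 := by
  rw [Perm.ncard_setOf_apply_eq_self]; decide

theorem G_le_normalizer_N : G ≤ Subgroup.normalizer N := by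
  rw [G, Subgroup.closure_le, Set.insert_subset_iff, Set.singleton_subset_iff]
  refine ⟨Subgroup.le_normalizer a_mem_N, Subgroup.mem_normalizer_of_conj_mem fun n hn => ?_⟩
  obtain ⟨x, rfl⟩ := mem_N.1 hn
  clear hn
  have hb : b * nword x * b⁻¹ = nword (-x.2, x.1) := by revert x; decide
  exact hb ▸ nword_mem_N _

theorem N_le_closure_conj_b {n : Perm (Fin 6)} (hn : n ∈ N) (h1 : n ≠ 1) :
    N ≤ Subgroup.closure {n, b * n * b⁻¹} := by
  obtain ⟨y, rfl⟩ := mem_N.1 hn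
  intro z hz
  obtain ⟨x, rfl⟩ := mem_N.1 hz
  obtain ⟨i, j, hij⟩ :
      ∃ i j : Fin 3, nword x = nword y ^ (i : ℕ) * (b * nword y * b⁻¹) ^ (j : ℕ) := by
    clear hn hz
    revert x y
    decide +kernel
  rw [hij]
  exact mul_mem (pow_mem (Subgroup.subset_closure (by simp)) _)
    (pow_mem (Subgroup.subset_closure (by simp)) _)

theorem isMinimalNormal_N : IsMinimalNormal G (N.subgroupOf G) :=
  isMinimalNormal_subgroupOf N_le_G G_le_normalizer_N
    (Subgroup.ne_bot_iff_exists_ne_one.2 ⟨⟨a, a_mem_N⟩, by decide⟩)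
    fun _ hn h1 => ⟨b, b_mem_G, N_le_closure_conj_b hn h1⟩

def otherBlock (i : Fin 6) : Finset (Fin 6) :=
  Finset.univ.filter fun j => (j : ℕ) < 3 ↔ 3 ≤ (i : ℕ)

theorem mem_otherBlock_of_fixes (i : Fin 6) {g : Perm (Fin 6)} (hg : g ∈ G) (hgi : g i = i) :
    ∀ j ∈ otherBlock i, g j ∈ otherBlock i := by
  obtain ⟨x, rfl⟩ := mem_G.1 hg
  clear hg
  revert x i
  decide +kernel

theorem eq_one_of_fixes_otherBlock (i : Fin 6) {g : Perm (Fin 6)} (hg : g ∈ G) (hgi : g i = i)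
    (h : ∀ j ∈ otherBlock i, g j = j) : g = 1 := by
  obtain ⟨x, rfl⟩ := mem_G.1 hg
  clear hg
  revert x i
  decide +kernel

theorem card_stabilizer (i : Fin 6) : Nat.card (stabilizer G i) = 6 := by
  have h := (stabilizer G i).card_mul_index
  rw [MulAction.index_stabilizer_of_transitive, Nat.card_eq_fintype_card (α := Fin 6), card_G] at h
  simp only [Fintype.card_fin] at h
  omega

theorem nonempty_stabilizer_mulEquiv_perm (i : Fin 6) :
    Nonempty (stabilizer G i ≃* Perm (Fin 3)) := by
  have hcard : Fintype.card (otherBlock i : Set (Fin 6)) = 3 := by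
    simp only [Finset.coe_sort_coe, Fintype.card_coe]
    revert i; decide
  refine MulAction.nonempty_mulEquiv_perm_of_faithful_on (otherBlock i : Set (Fin 6))
    (Fintype.equivFinOfCardEq hcard) (fun ⟨⟨g, hg⟩, hgi⟩ => mem_otherBlock_of_fixes i hg hgi)
    (fun ⟨⟨g, hg⟩, hgi⟩ h => ?_) (by rw [card_stabilizer]; rfl)
  exact Subtype.ext (Subtype.ext (eq_one_of_fixes_otherBlock i hg hgi h))

end ThreeSqFour

open ThreeSqFour in
theorem stmt_17 :
    let a : Equiv.Perm (Fin 6) := c[0, 1, 2]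
    let b : Equiv.Perm (Fin 6) := c[1, 4, 2, 5] * c[0, 3]
    let G : Subgroup (Equiv.Perm (Fin 6)) := Subgroup.closure {a, b}
    let N : Subgroup (Equiv.Perm (Fin 6)) :=
      Subgroup.closure {c[0, 1, 2], (c[3, 4, 5] : Equiv.Perm (Fin 6))}
    G ≤ alternatingGroup (Fin 6) ∧
    (∀ i j : Fin 6, ∃ g ∈ G, g i = j) ∧
    (∀ g ∈ G, g ≠ 1 → ({i : Fin 6 | g i = i} : Set (Fin 6)).ncard ≤ 3) ∧
    (∃ g ∈ G, g ≠ 1 ∧ ({i : Fin 6 | g i = i} : Set (Fin 6)).ncard = 3) ∧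
    Nat.card G = 36 ∧ N ≤ G ∧ Nat.card N = 9 ∧
    IsMinimalNormal G (N.subgroupOf G) ∧
    (∀ i : Fin 6, Nonempty (stabilizer G i ≃* Equiv.Perm (Fin 3))) :=
  ⟨G_le_alternatingGroup,
    fun i j => let ⟨g, hg⟩ := MulAction.exists_smul_eq G i j; ⟨g, g.2, hg⟩,
    fun _ => ncard_fixedPoints_le_three, ⟨a, a_mem_G, by decide, ncard_fixedPoints_a⟩,
    card_G, N_le_G, card_N, isMinimalNormal_N, nonempty_stabilizer_mulEquiv_perm⟩
end

section
/- Let H be a finite 2-group acting transitively and faithfully with fixity 2 on a finite set Δ, and suppose |Δ| ≥ 4. Then the center Z(H) has order 2, and for any g ∈ H of order 2 fixing exactly two points, the centralizer C_H(g) = Z(H)·⟨g⟩ has order 4, so g has exactly |H|/4 conjugates in H. -/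
open MulAction Pointwise

section Aux

variable {H Δ : Type*} [Group H] [Finite H] [MulAction H Δ] [Finite Δ]
  [FaithfulSMul H Δ] [IsPretransitive H Δ]

/-- A central element with a fixed point is trivial. -/
private lemma central_fix (z : H) (hz : z ∈ Subgroup.center H) {ω : Δ} (h : z • ω = ω) :
    z = 1 := by
  apply FaithfulSMul.eq_of_smul_eq_smul (α := Δ)
  intro δ
  obtain ⟨c, rfl⟩ := MulAction.exists_smul_eq H ω δ
  have hc := Subgroup.mem_center_iff.mp hz c
  rw [one_smul, smul_smul, ← hc, mul_smul, h]

/-- Key lemma: if `t ≠ 1` fixes exactly `{α, β}`, then any element fixing both `α` and `β`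
is `1` or `t`. -/
private lemma key (h2 : IsPGroup 2 H)
    (hfix1 : ∀ g : H, g ≠ 1 → (fixedBy Δ g).ncard ≤ 2) (hΔ : 4 ≤ Nat.card Δ)
    {α β : Δ} (hab : α ≠ β) {t : H} (ht1 : t ≠ 1) (hft : fixedBy Δ t = {α, β}) :
    ∀ s : H, s • α = α → s • β = β → s = 1 ∨ s = t := by
  haveI : Fact (Nat.Prime 2) := ⟨Nat.prime_two⟩
  by_contra hcon
  push_neg at hcon
  obtain ⟨s, hsα, hsβ, hs1, hst⟩ := hcon
  set S : Subgroup H := MulAction.stabilizer H α ⊓ MulAction.stabilizer H β with hS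
  have htα : t • α = α := by
    have : α ∈ fixedBy Δ t := by rw [hft]; exact Set.mem_insert _ _
    exact this
  have htβ : t • β = β := by
    have : β ∈ fixedBy Δ t := by rw [hft]; exact Set.mem_insert_of_mem _ rfl
    exact this
  have htS : t ∈ S := ⟨htα, htβ⟩
  have hsS : s ∈ S := ⟨hsα, hsβ⟩
  have hsub3 : ({1, t, s} : Set H) ⊆ (S : Set H) := by
    rintro x (rfl | rfl | rfl)
    · exact S.one_mem
    · exact htS
    · exact hsS
  have h3 : ({1, t, s} : Set H).ncard = 3 := by
    rw [Set.ncard_insert_of_notMem (by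
      simp only [Set.mem_insert_iff, Set.mem_singleton_iff]
      push_neg
      exact ⟨Ne.symm ht1, Ne.symm hs1⟩), Set.ncard_pair (Ne.symm hst)]
  have h3le : 3 ≤ Nat.card S := by
    have h := Set.ncard_le_ncard hsub3 (Set.toFinite _)
    rw [h3] at h
    rwa [← Nat.card_coe_set_eq (S : Set H)] at h
  have h4le : 2 ^ 2 ≤ Nat.card S := by
    obtain ⟨k, hk⟩ := (h2.to_subgroup S).exists_card_eq
    rw [hk] at h3le ⊢
    rcases Nat.lt_or_ge k 2 with hc | hc
    · interval_cases k <;> omega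
    · exact Nat.pow_le_pow_right (by norm_num) hc
  obtain ⟨T, hTS, hT4⟩ := Sylow.exists_subgroup_le_card_pow_prime_of_le_card Nat.prime_two h2 h4le
  have hTfix : ∀ x : H, x ∈ T → x ≠ 1 → fixedBy Δ x = {α, β} := by
    intro x hxT hx1
    have hxS := hTS hxT
    refine (Set.eq_of_subset_of_ncard_le ?_ ?_ (Set.toFinite _)).symm
    · rintro y hy
      rcases hy with rfl | rfl
      · exact hxS.1
      · exact hxS.2
    · rw [Set.ncard_pair hab]; exact hfix1 x hx1
  classical
  letI : Fintype Δ := Fintype.ofFinite Δ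
  letI : Fintype ↥T := Fintype.ofFinite _
  letI : ∀ a : ↥T, Fintype (fixedBy Δ a) := fun a => Fintype.ofFinite _
  letI : Fintype (Quotient (MulAction.orbitRel ↥T Δ)) := Fintype.ofFinite _
  have hb := MulAction.sum_card_fixedBy_eq_card_orbits_mul_card_group ↥T Δ
  have hTcard : Fintype.card ↥T = 4 := by rw [← Nat.card_eq_fintype_card]; exact hT4
  have hone : Fintype.card (fixedBy Δ (1 : ↥T)) = Fintype.card Δ := by
    have h1 : fixedBy Δ (1 : ↥T) = Set.univ := by
      ext y; simp [MulAction.mem_fixedBy]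
    rw [← Nat.card_eq_fintype_card, ← Nat.card_eq_fintype_card, h1]
    exact Nat.card_congr (Equiv.Set.univ Δ)
  have htwo : ∀ a : ↥T, a ≠ 1 → Fintype.card (fixedBy Δ a) = 2 := by
    intro a ha
    have hane : (a : H) ≠ 1 := fun h => ha (Subtype.ext h)
    have hcoe : fixedBy Δ a = fixedBy Δ (a : H) := rfl
    rw [← Nat.card_eq_fintype_card, Nat.card_coe_set_eq, hcoe,
      hTfix (a : H) a.2 hane, Set.ncard_pair hab]
  have hsplit : (∑ a : ↥T, Fintype.card (fixedBy Δ a))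
      = Fintype.card (fixedBy Δ (1 : ↥T))
        + ∑ a ∈ Finset.univ.erase (1 : ↥T), Fintype.card (fixedBy Δ a) :=
    (Finset.add_sum_erase _ _ (Finset.mem_univ 1)).symm
  have hsum2 : ∑ a ∈ Finset.univ.erase (1 : ↥T), Fintype.card (fixedBy Δ a) = 6 := by
    have hcongr : ∀ a ∈ Finset.univ.erase (1 : ↥T), Fintype.card (fixedBy Δ a) = 2 :=
      fun a ha => htwo a (Finset.ne_of_mem_erase ha)
    rw [Finset.sum_congr rfl hcongr, Finset.sum_const,
      Finset.card_erase_of_mem (Finset.mem_univ _), Finset.card_univ, hTcard]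
    simp
  rw [hsplit, hone, hsum2, hTcard] at hb
  -- hb : Fintype.card Δ + 6 = card Ω * 4
  have h46 : (4 : ℕ) ∣ Fintype.card Δ + 6 := by
    rw [hb]; exact dvd_mul_left 4 _
  -- card Δ is a power of 2, at least 4, so divisible by 4
  have hne : Nonempty Δ := by
    have : 0 < Nat.card Δ := by omega
    exact (Nat.card_pos_iff.mp this).1
  obtain ⟨x⟩ := hne
  have hdvd : Nat.card Δ ∣ Nat.card H := by
    rw [← MulAction.index_stabilizer_of_transitive H x]
    exact Subgroup.index_dvd_card _
  obtain ⟨n, hn⟩ := h2.exists_card_eq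
  rw [hn] at hdvd
  obtain ⟨m, _, hm⟩ := (Nat.dvd_prime_pow Nat.prime_two).mp hdvd
  have hm2 : 2 ≤ m := by
    by_contra hc
    push_neg at hc
    rw [hm] at hΔ
    interval_cases m <;> omega
  have h4dvd : (4 : ℕ) ∣ Nat.card Δ := by
    rw [hm]
    have : (2 : ℕ) ^ 2 ∣ 2 ^ m := pow_dvd_pow 2 hm2
    simpa using this
  rw [Nat.card_eq_fintype_card] at h4dvd
  omega

/-- A nontrivial central element swaps the two fixed points of `t`. -/
private lemma swap_lem (z : H) (hz : z ∈ Subgroup.center H) (hz1 : z ≠ 1)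
    {α β : Δ} {t : H} (hft : fixedBy Δ t = {α, β}) :
    z • α = β ∧ z • β = α := by
  have hmem : ∀ ω : Δ, ω ∈ fixedBy Δ t → z • ω ∈ fixedBy Δ t := by
    intro ω hω
    rw [MulAction.mem_fixedBy] at *
    rw [smul_smul, Subgroup.mem_center_iff.mp hz t, mul_smul, hω]
  have hα : α ∈ fixedBy Δ t := by rw [hft]; exact Set.mem_insert _ _
  have hβ : β ∈ fixedBy Δ t := by rw [hft]; exact Set.mem_insert_of_mem _ rfl
  have hzα := hmem α hα; rw [hft] at hzα
  have hzβ := hmem β hβ; rw [hft] at hzβ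
  rcases hzα with h1 | h1
  · exact absurd (central_fix z hz h1) hz1
  · rcases hzβ with h2 | h2
    · exact ⟨h1, h2⟩
    · exact absurd (central_fix z hz h2) hz1

end Aux

theorem stmt_18 (H Δ : Type*) [Group H] [Finite H] [MulAction H Δ] [Finite Δ]
    [FaithfulSMul H Δ] [IsPretransitive H Δ] (h2 : IsPGroup 2 H)
    (hfix : HasFixity H Δ 2) (hΔ : 4 ≤ Nat.card Δ) :
    Nat.card (Subgroup.center H) = 2 ∧
    ∀ g : H, orderOf g = 2 → (fixedBy Δ g).ncard = 2 →
      Subgroup.centralizer {g} = Subgroup.center H ⊔ Subgroup.zpowers g ∧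
      Nat.card (Subgroup.centralizer {g}) = 4 ∧
      ({h : H | IsConj g h} : Set H).ncard = Nat.card H / 4 := by
  haveI : Fact (Nat.Prime 2) := ⟨Nat.prime_two⟩
  obtain ⟨hfix1, t, ht1, htfix⟩ := hfix
  obtain ⟨α, β, hab, hft⟩ := Set.ncard_eq_two.mp htfix
  haveI : Nontrivial H := nontrivial_of_ne t 1 ht1
  haveI := h2.center_nontrivial
  obtain ⟨w, hw1⟩ := exists_ne (1 : Subgroup.center H)
  set z : H := (w : H) with hzdef
  have hz : z ∈ Subgroup.center H := w.2
  have hz1 : z ≠ 1 := fun h => hw1 (Subtype.ext h)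
  have hcenter_set : (Subgroup.center H : Set H) = {1, z} := by
    ext c
    constructor
    · intro hc
      by_cases hc1 : c = 1
      · exact Or.inl hc1
      · right
        obtain ⟨hcα, _⟩ := swap_lem c hc hc1 hft
        obtain ⟨hzα, hzβ⟩ := swap_lem z hz hz1 hft
        have hfixα : (z⁻¹ * c) • α = α := by
          rw [mul_smul, hcα, ← hzα, inv_smul_smul]
        have h0 : z⁻¹ * c = 1 :=
          central_fix _ (mul_mem (inv_mem hz) hc) hfixα
        exact (inv_mul_eq_one.mp h0).symm
    · rintro (rfl | rfl)
      · exact Subgroup.one_mem _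
      · exact hz
  have hcenter_card : Nat.card (Subgroup.center H) = 2 := by
    rw [← SetLike.coe_sort_coe, Nat.card_coe_set_eq, hcenter_set,
      Set.ncard_pair (Ne.symm hz1)]
  refine ⟨hcenter_card, ?_⟩
  intro g hgord hgfix
  obtain ⟨γ, δ, hγδ, hgf⟩ := Set.ncard_eq_two.mp hgfix
  have hg1 : g ≠ 1 := by
    intro h; rw [h, orderOf_one] at hgord; omega
  have hgg : g * g = 1 := by
    have h := pow_orderOf_eq_one g
    rw [hgord, pow_two] at h
    exact h
  have key2 := key h2 hfix1 hΔ hγδ hg1 hgf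
  obtain ⟨hzγ, hzδ⟩ := swap_lem z hz hz1 hgf
  have hgγ : g • γ = γ := by
    have : γ ∈ fixedBy Δ g := by rw [hgf]; exact Set.mem_insert _ _
    exact this
  have hgδ : g • δ = δ := by
    have : δ ∈ fixedBy Δ g := by rw [hgf]; exact Set.mem_insert_of_mem _ rfl
    exact this
  have hzg : z ≠ g := by
    intro h
    rw [h, hgγ] at hzγ
    exact hγδ hzγ
  have hcomm := Subgroup.mem_center_iff.mp hz g  -- g * z = z * g
  have hcent_set : (Subgroup.centralizer {g} : Set H) = {1, g, z, z * g} := by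
    ext c
    simp only [SetLike.mem_coe, Subgroup.mem_centralizer_singleton_iff,
      Set.mem_insert_iff, Set.mem_singleton_iff]
    constructor
    · intro hc  -- c * g = g * c
      have hfixc : ∀ ω : Δ, g • ω = ω → g • (c • ω) = c • ω := by
        intro ω hω
        rw [smul_smul, ← hc, mul_smul, hω]
      have hcγ : c • γ = γ ∨ c • γ = δ := by
        have h' : c • γ ∈ fixedBy Δ g := hfixc γ hgγ
        rwa [hgf] at h'
      have hcδ : c • δ = γ ∨ c • δ = δ := by
        have h' : c • δ ∈ fixedBy Δ g := hfixc δ hgδ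
        rwa [hgf] at h'
      rcases hcγ with h1 | h1
      · rcases hcδ with h2 | h2
        · exact absurd (smul_left_cancel c (h2.trans h1.symm)) (Ne.symm hγδ)
        · rcases key2 c h1 h2 with rfl | rfl
          · exact Or.inl rfl
          · exact Or.inr (Or.inl rfl)
      · rcases hcδ with h2 | h2
        · have hwγ : (z⁻¹ * c) • γ = γ := by
            rw [mul_smul, h1, ← hzγ, inv_smul_smul]
          have hwδ : (z⁻¹ * c) • δ = δ := by
            rw [mul_smul, h2, ← hzδ, inv_smul_smul]
          rcases key2 _ hwγ hwδ with hw | hw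
          · exact Or.inr (Or.inr (Or.inl (inv_mul_eq_one.mp hw).symm))
          · exact Or.inr (Or.inr (Or.inr (inv_mul_eq_iff_eq_mul.mp hw)))
        · exact absurd (smul_left_cancel c (h1.trans h2.symm)) hγδ
    · rintro (rfl | rfl | rfl | rfl)
      · simp
      · rfl
      · exact hcomm.symm
      · conv_rhs => rw [← mul_assoc, hcomm]
  have hzgne : z * g ≠ 1 := by
    intro h
    exact hzg ((eq_inv_of_mul_eq_one_left h).trans (inv_eq_of_mul_eq_one_left hgg))
  have hzgg : z * g ≠ g := fun h => hz1 (mul_right_cancel (h.trans (one_mul g).symm))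
  have hzgz : z * g ≠ z := fun h => hg1 (mul_left_cancel (h.trans (mul_one z).symm))
  have hcent_card : Nat.card (Subgroup.centralizer {g}) = 4 := by
    rw [← SetLike.coe_sort_coe, Nat.card_coe_set_eq, hcent_set,
      Set.ncard_insert_of_notMem (by
        simp only [Set.mem_insert_iff, Set.mem_singleton_iff]
        push_neg
        exact ⟨Ne.symm hg1, Ne.symm hz1, Ne.symm hzgne⟩),
      Set.ncard_insert_of_notMem (by
        simp only [Set.mem_insert_iff, Set.mem_singleton_iff]
        push_neg
        exact ⟨Ne.symm hzg, Ne.symm hzgg⟩),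
      Set.ncard_insert_of_notMem (by
        simp only [Set.mem_singleton_iff]
        exact Ne.symm hzgz),
      Set.ncard_singleton]
  have hsup : Subgroup.centralizer {g} = Subgroup.center H ⊔ Subgroup.zpowers g := by
    apply le_antisymm
    · intro c hc
      have hc' : c ∈ ({1, g, z, z * g} : Set H) := by rw [← hcent_set]; exact hc
      rcases hc' with h | h | h | h <;> rw [h]
      · exact Subgroup.one_mem _
      · exact Subgroup.mem_sup_right (Subgroup.mem_zpowers g)
      · exact Subgroup.mem_sup_left hz
      · exact mul_mem (Subgroup.mem_sup_left hz)
          (Subgroup.mem_sup_right (Subgroup.mem_zpowers g))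
    · exact sup_le (Subgroup.center_le_centralizer _)
        ((Subgroup.zpowers_le).mpr (Subgroup.mem_centralizer_singleton_iff.mpr rfl))
  have horb : {h : H | IsConj g h} = MulAction.orbit (ConjAct H) g := by
    ext h
    simp only [Set.mem_setOf_eq, ConjAct.mem_orbit_conjAct]
    exact isConj_comm
  have hclass : ({h : H | IsConj g h} : Set H).ncard = Nat.card H / 4 := by
    rw [horb, ← MulAction.index_stabilizer]
    have hcomap := Subgroup.centralizer_eq_comap_stabilizer g
    have hsmul : Nat.card (MulAction.stabilizer (ConjAct H) g) = 4 := by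
      rw [← hcent_card, hcomap]
      exact Nat.card_congr
        (Equiv.subtypeEquiv ConjAct.toConjAct.toEquiv (fun x => Iff.rfl)).symm
    have hidx := Subgroup.index_mul_card (MulAction.stabilizer (ConjAct H) g)
    rw [hsmul] at hidx
    have hHc : Nat.card (ConjAct H) = Nat.card H :=
      Nat.card_congr ConjAct.ofConjAct.toEquiv
    rw [hHc] at hidx
    omega
  exact ⟨hsup, hcent_card, hclass⟩
end
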